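/- arXiv:2509.08788 — 7 statements merged into one kernel-verified Lean document; each statement's English description precedes it below -/
import Mathlib

section
/- Let (Ω, 𝓕, P) be a probability space and let T, C : Ω → ℝ be independent random variables with T ≥ 0 almost surely. Define the observed time Y = min(T, C), the censoring indicator Δ = 1{T ≤ C}, and the censoring survival function K(u) = P(C ≥ u). Assume K(T) > 0 almost surely. Then E[Δ · Y / K(Y)] = E[T], where both sides are Lebesgue integrals of nonnegative functions (possibly infinite). -/
open MeasureTheory ProbabilityTheory
open scoped ENNReal

/-- **IPCW identification.** Let `T, C : Ω → ℝ` be independent random variables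
with `T ≥ 0` a.s.; let `Y = min(T, C)` be the observed time, `Δ = 1{T ≤ C}` the censoring
indicator, and `K u = P(C ≥ u)` the censoring survival function, with `K(T) > 0` a.s. Then
`E[Δ · Y / K(Y)] = E[T]`, where both sides are Lebesgue integrals of nonnegative functions
(possibly infinite). -/
theorem lintegral_ipcw_weighted_observed_eq_lintegral_survival
    {Ω : Type*} [MeasurableSpace Ω] (P : Measure Ω) [IsProbabilityMeasure P]
    (T C : Ω → ℝ) (hT : Measurable T) (hC : Measurable C)
    (hTC : IndepFun T C P)
    (hTpos : ∀ᵐ ω ∂P, 0 ≤ T ω)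
    (Y : Ω → ℝ) (hY : ∀ ω, Y ω = min (T ω) (C ω))
    (K : ℝ → ℝ≥0∞) (hK : ∀ u, K u = P {ω | u ≤ C ω})
    (hKT : ∀ᵐ ω ∂P, 0 < K (T ω)) :
    ∫⁻ ω, (if T ω ≤ C ω then ENNReal.ofReal (Y ω) / K (Y ω) else 0) ∂P
      = ∫⁻ ω, ENNReal.ofReal (T ω) ∂P := by
  have hKanti : Antitone K := by
    intro a b hab
    rw [hK, hK]
    exact measure_mono fun ω hω => le_trans hab hω
  have hKmeas : Measurable K := hKanti.measurable
  have hg : Measurable (fun t : ℝ => ENNReal.ofReal t / K t) :=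
    ENNReal.measurable_ofReal.div hKmeas
  set F : ℝ × ℝ → ℝ≥0∞ :=
    fun p => if p.1 ≤ p.2 then ENNReal.ofReal p.1 / K p.1 else 0 with hFdef
  have hF : Measurable F :=
    Measurable.ite (measurableSet_le measurable_fst measurable_snd) (hg.comp measurable_fst) measurable_const
  have hmap : P.map (fun ω => (T ω, C ω)) = (P.map T).prod (P.map C) :=
    (indepFun_iff_map_prod_eq_prod_map_map hT.aemeasurable hC.aemeasurable).mp hTC
  have hKne : ∀ u, K u ≠ ∞ := fun u => by rw [hK]; exact measure_ne_top _ _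
  calc ∫⁻ ω, (if T ω ≤ C ω then ENNReal.ofReal (Y ω) / K (Y ω) else 0) ∂P
      = ∫⁻ ω, F (T ω, C ω) ∂P := by
        refine lintegral_congr fun ω => ?_
        by_cases h : T ω ≤ C ω
        · simp [hFdef, h, hY ω, min_eq_left h]
        · simp [hFdef, h]
    _ = ∫⁻ p, F p ∂(P.map (fun ω => (T ω, C ω))) :=
        (lintegral_map hF (hT.prodMk hC)).symm
    _ = ∫⁻ p, F p ∂((P.map T).prod (P.map C)) := by rw [hmap]
    _ = ∫⁻ t, ∫⁻ c, F (t, c) ∂(P.map C) ∂(P.map T) := lintegral_prod _ hF.aemeasurable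
    _ = ∫⁻ t, ENNReal.ofReal t / K t * K t ∂(P.map T) := by
        refine lintegral_congr fun t => ?_
        have : ∀ c : ℝ, F (t, c) = Set.indicator (Set.Ici t)
            (fun _ => ENNReal.ofReal t / K t) c := by
          intro c
          simp [hFdef, Set.indicator_apply, Set.mem_Ici]
        simp_rw [this]
        rw [lintegral_indicator_const measurableSet_Ici,
          Measure.map_apply hC measurableSet_Ici, hK]
        rfl
    _ = ∫⁻ ω, ENNReal.ofReal (T ω) / K (T ω) * K (T ω) ∂P :=
        lintegral_map ((hg.mul hKmeas)) hT
    _ = ∫⁻ ω, ENNReal.ofReal (T ω) ∂P := by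
        refine lintegral_congr_ae ?_
        filter_upwards [hKT] with ω hω
        exact ENNReal.div_mul_cancel hω.ne' (hKne _)
end

section
/- Let (Ω, 𝓕, P) be a probability space and let T, C : Ω → ℝ be independent random variables. Define Y = min(T, C), Δ = 1{T ≤ C}, and K(u) = P(C ≥ u). Assume K(T) > 0 almost surely. Then E[Δ / K(Y)] = 1. -/
open MeasureTheory ProbabilityTheory
open scoped ENNReal

/-- **censoring estimating equation, population version.** Let `T, C : Ω → ℝ` be
independent random variables; let `Y = min(T, C)`, `Δ = 1{T ≤ C}`, and `K u = P(C ≥ u)`, with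
`K(T) > 0` a.s. Then `E[Δ / K(Y)] = 1`. -/
theorem lintegral_ipcw_weight_eq_one
    {Ω : Type*} [MeasurableSpace Ω] (P : Measure Ω) [IsProbabilityMeasure P]
    (T C : Ω → ℝ) (hT : Measurable T) (hC : Measurable C)
    (hTC : IndepFun T C P)
    (Y : Ω → ℝ) (hY : ∀ ω, Y ω = min (T ω) (C ω))
    (K : ℝ → ℝ≥0∞) (hK : ∀ u, K u = P {ω | u ≤ C ω})
    (hKT : ∀ᵐ ω ∂P, 0 < K (T ω)) :
    ∫⁻ ω, (if T ω ≤ C ω then 1 / K (Y ω) else 0) ∂P = 1 := by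
  classical
  set μ := P.map T with hμ
  set ν := P.map C with hν
  have hmap : P.map (fun ω => (T ω, C ω)) = μ.prod ν :=
    (indepFun_iff_map_prod_eq_prod_map_map hT.aemeasurable hC.aemeasurable).mp hTC
  have hKanti : Antitone K := fun a b hab => by
    rw [hK, hK]; exact measure_mono (fun ω h => le_trans hab h)
  have hKmeas : Measurable K := hKanti.measurable
  have hKν : ∀ t, K t = ν (Set.Ici t) := by
    intro t
    rw [hν, Measure.map_apply hC measurableSet_Ici, hK]
    rfl
  set g : ℝ × ℝ → ℝ≥0∞ := fun p => if p.1 ≤ p.2 then 1 / K p.1 else 0 with hgdef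
  have hg : Measurable g := by
    apply Measurable.ite
    · exact measurableSet_le measurable_fst measurable_snd
    · exact (hKmeas.comp measurable_fst).const_div 1
    · exact measurable_const
  have heq : (fun ω => if T ω ≤ C ω then 1 / K (Y ω) else 0)
      = fun ω => g (T ω, C ω) := by
    funext ω
    by_cases h : T ω ≤ C ω
    · simp [hgdef, h, hY ω, min_eq_left h]
    · simp [hgdef, h]
  rw [heq, ← lintegral_map hg (hT.prodMk hC), hmap, lintegral_prod _ hg.aemeasurable]
  have hinner : ∀ t, ∫⁻ c, g (t, c) ∂ν = (1 / K t) * K t := by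
    intro t
    have hind : (fun c => g (t, c)) = (Set.Ici t).indicator (fun _ => 1 / K t) := by
      funext c
      by_cases h : t ≤ c
      · simp [hgdef, h, Set.indicator_of_mem (Set.mem_Ici.mpr h)]
      · simp [hgdef, h, Set.indicator_of_notMem (fun hc => h (Set.mem_Ici.mp hc))]
    simp only [hind]
    rw [lintegral_indicator_const measurableSet_Ici, hKν t]
  simp_rw [hinner]
  have hμprob : IsProbabilityMeasure μ := Measure.isProbabilityMeasure_map hT.aemeasurable
  have hae : ∀ᵐ t ∂μ, 0 < K t := by
    rw [hμ, ae_map_iff hT.aemeasurable (measurableSet_lt measurable_const hKmeas)]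
    exact hKT
  have h1 : ∀ᵐ t ∂μ, (1 / K t) * K t = 1 := by
    filter_upwards [hae] with t ht
    rw [one_div, ENNReal.inv_mul_cancel ht.ne' ?_]
    have hle : K t ≤ 1 := by rw [hK]; exact prob_le_one
    exact (lt_of_le_of_lt hle ENNReal.one_lt_top).ne
  rw [lintegral_congr_ae h1, lintegral_one, measure_univ]
end

section
/- Let (Ω, 𝓕, P) be a probability space with Ω a standard Borel space. Let X : Ω → ℝ^p, D : Ω → ℝ with D taking values in {0, 1}, and T : Ω → ℝ be random variables with T ≥ 0 almost surely and T integrable. Let π : ℝ^p → ℝ be measurable with 0 ≤ π(X) < 1 almost surely and E[D | σ(X)] = π(X) almost surely. Assume D and T are conditionally independent given σ(X), and that (1 − D)·T/(1 − π(X)) is integrable. Then E[(1 − D) · T / (1 − π(X))] = E[T]. -/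
open MeasureTheory ProbabilityTheory

/-- Auxiliary: conditional expectation of a product of conditionally independent
real random variables factorizes, when one of them is `{0,1}`-valued. -/
theorem aux_condexp_mul_of_condIndepFun
    {Ω : Type*} {m' mΩ : MeasurableSpace Ω} [StandardBorelSpace Ω]
    {P : Measure Ω} [IsProbabilityMeasure P] (hm' : m' ≤ mΩ)
    (D : Ω → ℝ) (hD : Measurable D) (hD01 : ∀ ω, D ω = 0 ∨ D ω = 1)
    (T : Ω → ℝ) (hT : Measurable T) (hTint : Integrable T P)
    (hci : CondIndepFun m' hm' D T P) :
    P[(fun ω => (1 - D ω) * T ω) | m'] =ᵐ[P]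
      fun ω => (P[(fun ω => 1 - D ω) | m']) ω * (P[T | m']) ω := by
  classical
  set κ := condExpKernel P m' with hκdef
  set A : Set Ω := D ⁻¹' {0} with hAdef
  have hA : MeasurableSet A := hD (measurableSet_singleton 0)
  have hDT_eq : ∀ x, (1 - D x) * T x = A.indicator T x := by
    intro x
    rcases hD01 x with h | h
    · simp [hAdef, Set.indicator_of_mem, h]
    · have hx : x ∉ A := by simp [hAdef, h]
      simp [Set.indicator_of_notMem hx, h]
  have hD_eq : ∀ x, (1 - D x) = A.indicator (fun _ => (1:ℝ)) x := by
    intro x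
    rcases hD01 x with h | h
    · simp [hAdef, h]
    · have hx : x ∉ A := by simp [hAdef, h]
      simp [Set.indicator_of_notMem hx, h]
  have hDmeas : Measurable fun ω => 1 - D ω := measurable_const.sub hD
  have hDTmeas : Measurable fun ω => (1 - D ω) * T ω := hDmeas.mul hT
  have hDTint : Integrable (fun ω => (1 - D ω) * T ω) P := by
    refine hTint.mono hDTmeas.aestronglyMeasurable (Filter.Eventually.of_forall fun x => ?_)
    rw [norm_mul]
    have h1 : ‖1 - D x‖ ≤ 1 := by
      rcases hD01 x with h | h <;> simp [h]
    calc ‖1 - D x‖ * ‖T x‖ ≤ 1 * ‖T x‖ :=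
          mul_le_mul_of_nonneg_right h1 (norm_nonneg _)
      _ = ‖T x‖ := one_mul _
  have hDint : Integrable (fun ω => 1 - D ω) P := by
    refine (integrable_const (1:ℝ)).mono hDmeas.aestronglyMeasurable
      (Filter.Eventually.of_forall fun x => ?_)
    rcases hD01 x with h | h <;> simp [h]
  -- a.e. kernel independence on rational Iic sets
  have hrat : ∀ᵐ ω ∂P, ∀ q : ℚ,
      κ ω (A ∩ T ⁻¹' Set.Iic (q:ℝ)) = κ ω A * κ ω (T ⁻¹' Set.Iic (q:ℝ)) := by
    refine ae_of_ae_trim hm' ?_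
    rw [ae_all_iff]
    intro q
    exact hci.measure_inter_preimage_eq_mul {0} (Set.Iic (q:ℝ))
      (measurableSet_singleton 0) measurableSet_Iic
  have hTκ : ∀ᵐ ω ∂P, Integrable T (κ ω) := hTint.condExpKernel_ae
  -- key factorization under the kernel
  have hfact : ∀ᵐ ω ∂P, ∫ x, (1 - D x) * T x ∂(κ ω)
      = (∫ x, (1 - D x) ∂(κ ω)) * ∫ x, T x ∂(κ ω) := by
    filter_upwards [hrat, hTκ] with ω hω hTω
    set ν := κ ω with hν
    have hmap : Measure.map T (ν.restrict A) = ν A • Measure.map T ν := by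
      refine ext_of_generate_finite _ Real.borel_eq_generateFrom_Iic_rat
        Real.isPiSystem_Iic_rat ?_ ?_
      · rintro s hs
        simp only [Set.mem_iUnion, Set.mem_singleton_iff] at hs
        obtain ⟨q, rfl⟩ := hs
        rw [Measure.map_apply hT measurableSet_Iic,
          Measure.restrict_apply (hT measurableSet_Iic), Measure.smul_apply,
          Measure.map_apply hT measurableSet_Iic, smul_eq_mul, Set.inter_comm]
        exact hω q
      · rw [Measure.map_apply hT MeasurableSet.univ, Set.preimage_univ,
          Measure.restrict_apply MeasurableSet.univ, Set.univ_inter, Measure.smul_apply,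
          Measure.map_apply hT MeasurableSet.univ, Set.preimage_univ, smul_eq_mul,
          measure_univ, mul_one]
    have hI1 : ∫ x, (1 - D x) * T x ∂ν = ∫ x in A, T x ∂ν := by
      simp_rw [hDT_eq]
      exact integral_indicator hA
    have hI2 : ∫ x, (1 - D x) ∂ν = (ν A).toReal := by
      simp_rw [hD_eq]
      rw [integral_indicator hA]
      simp [Measure.real]
    have hI3 : ∫ x in A, T x ∂ν = (ν A).toReal * ∫ x, T x ∂ν := by
      have h1 : ∫ x in A, T x ∂ν = ∫ y, y ∂(Measure.map T (ν.restrict A)) :=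
        (integral_map hT.aemeasurable aestronglyMeasurable_id).symm
      have h2 : ∫ y, y ∂(Measure.map T ν) = ∫ x, T x ∂ν :=
        integral_map hT.aemeasurable aestronglyMeasurable_id
      rw [h1, hmap, integral_smul_measure, h2, smul_eq_mul]
    rw [hI1, hI2, hI3]
  have e1 : P[(fun ω => (1 - D ω) * T ω) | m'] =ᵐ[P]
      fun ω => ∫ x, (1 - D x) * T x ∂(κ ω) :=
    condExp_ae_eq_integral_condExpKernel hm' hDTint
  have e2 : P[T | m'] =ᵐ[P] fun ω => ∫ x, T x ∂(κ ω) :=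
    condExp_ae_eq_integral_condExpKernel hm' hTint
  have e3 : P[(fun ω => 1 - D ω) | m'] =ᵐ[P] fun ω => ∫ x, (1 - D x) ∂(κ ω) :=
    condExp_ae_eq_integral_condExpKernel hm' hDint
  filter_upwards [e1, e2, e3, hfact] with ω h1 h2 h3 h4
  rw [h1, h4, ← h3, ← h2]

/-- **IPW identity, control arm.** On a standard Borel probability space, let
`X : Ω → ℝ^p` be covariates, `D : Ω → ℝ` a binary treatment indicator with values in `{0,1}`,
and `T : Ω → ℝ` with `T ≥ 0` a.s. and `T` integrable. Let `π : ℝ^p → ℝ` be measurable with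
`0 ≤ π(X) < 1` a.s. and `E[D | σ(X)] = π(X)` a.s.; assume `D` and `T` are conditionally
independent given `σ(X)`, and `(1 − D)·T/(1 − π(X))` is integrable. Then `E[(1 − D)·T/(1 − π(X))] = E[T]`. -/
theorem ipw_identity_control
    {Ω : Type*} [MeasurableSpace Ω] [StandardBorelSpace Ω]
    (P : Measure Ω) [IsProbabilityMeasure P]
    {p : ℕ} (X : Ω → EuclideanSpace ℝ (Fin p)) (hX : Measurable X)
    (D : Ω → ℝ) (hD : Measurable D) (hD01 : ∀ ω, D ω = 0 ∨ D ω = 1)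
    (T : Ω → ℝ) (hT : Measurable T) (hTpos : ∀ᵐ ω ∂P, 0 ≤ T ω)
    (hTint : Integrable T P)
    (π : EuclideanSpace ℝ (Fin p) → ℝ) (hπ : Measurable π)
    (hπpos : ∀ᵐ ω ∂P, 0 ≤ π (X ω) ∧ π (X ω) < 1)
    (hps : P[D | MeasurableSpace.comap X inferInstance] =ᵐ[P] fun ω => π (X ω))
    (hci : CondIndepFun (MeasurableSpace.comap X inferInstance) hX.comap_le D T P)
    (hint : Integrable (fun ω => (1 - D ω) * T ω / (1 - π (X ω))) P) :
    ∫ ω, (1 - D ω) * T ω / (1 - π (X ω)) ∂P = ∫ ω, T ω ∂P := by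
  have hm' : MeasurableSpace.comap X inferInstance ≤ ‹MeasurableSpace Ω› := hX.comap_le
  have key0 := aux_condexp_mul_of_condIndepFun hm' D hD hD01 T hT hTint hci
  have hDmeas : Measurable fun ω => 1 - D ω := measurable_const.sub hD
  have hDTmeas : Measurable fun ω => (1 - D ω) * T ω := hDmeas.mul hT
  have hDTint : Integrable (fun ω => (1 - D ω) * T ω) P := by
    refine hTint.mono hDTmeas.aestronglyMeasurable (Filter.Eventually.of_forall fun x => ?_)
    rw [norm_mul]
    have h1 : ‖1 - D x‖ ≤ 1 := by
      rcases hD01 x with h | h <;> simp [h]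
    calc ‖1 - D x‖ * ‖T x‖ ≤ 1 * ‖T x‖ :=
          mul_le_mul_of_nonneg_right h1 (norm_nonneg _)
      _ = ‖T x‖ := one_mul _
  have e4 : P[(fun ω => 1 - D ω) | MeasurableSpace.comap X inferInstance] =ᵐ[P]
      fun ω => 1 - π (X ω) := by
    have h1 : P[(fun ω => 1 - D ω) | MeasurableSpace.comap X inferInstance] =ᵐ[P]
        P[(fun _ => (1:ℝ)) | MeasurableSpace.comap X inferInstance]
          - P[D | MeasurableSpace.comap X inferInstance] :=
      condExp_sub (integrable_const 1) (by
        refine (integrable_const (1:ℝ)).mono hD.aestronglyMeasurable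
          (Filter.Eventually.of_forall fun x => ?_)
        rcases hD01 x with h | h <;> simp [h]) _
    have h2 : P[(fun _ => (1:ℝ)) | MeasurableSpace.comap X inferInstance]
        = fun _ => (1:ℝ) := condExp_const hm' 1
    filter_upwards [h1, hps] with ω hω hpsω
    rw [hω]
    simp only [Pi.sub_apply, h2, hpsω]
  have key : P[(fun ω => (1 - D ω) * T ω) | MeasurableSpace.comap X inferInstance] =ᵐ[P]
      fun ω => (1 - π (X ω)) * (P[T | MeasurableSpace.comap X inferInstance]) ω := by
    filter_upwards [key0, e4] with ω h1 h2
    rw [h1, h2]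
  have hgmeas : StronglyMeasurable[MeasurableSpace.comap X inferInstance]
      fun ω => (1 - π (X ω))⁻¹ := by
    have hXm : Measurable[MeasurableSpace.comap X inferInstance] X :=
      measurable_iff_comap_le.2 le_rfl
    exact ((measurable_const.sub hπ).inv.comp hXm).stronglyMeasurable
  have hfun_eq : (fun ω => (1 - D ω) * T ω / (1 - π (X ω)))
      = (fun ω => (1 - π (X ω))⁻¹) * (fun ω => (1 - D ω) * T ω) := by
    funext ω
    simp [div_eq_mul_inv, mul_comm]
  have hint' : Integrable ((fun ω => (1 - π (X ω))⁻¹) * fun ω => (1 - D ω) * T ω) P := by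
    rw [← hfun_eq]; exact hint
  have hmul := condExp_mul_of_stronglyMeasurable_left (μ := P) hgmeas hint' hDTint
  have final : P[(fun ω => (1 - D ω) * T ω / (1 - π (X ω)))
      | MeasurableSpace.comap X inferInstance] =ᵐ[P]
      P[T | MeasurableSpace.comap X inferInstance] := by
    rw [hfun_eq]
    refine hmul.trans ?_
    filter_upwards [key, hπpos] with ω h1 h2
    have hne : (1 : ℝ) - π (X ω) ≠ 0 := by
      have := h2.2; linarith
    simp only [Pi.mul_apply, h1]
    rw [← mul_assoc, inv_mul_cancel₀ hne, one_mul]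
  calc ∫ ω, (1 - D ω) * T ω / (1 - π (X ω)) ∂P
      = ∫ ω, (P[(fun ω => (1 - D ω) * T ω / (1 - π (X ω)))
          | MeasurableSpace.comap X inferInstance]) ω ∂P :=
        (integral_condExp hm').symm
    _ = ∫ ω, (P[T | MeasurableSpace.comap X inferInstance]) ω ∂P := integral_congr_ae final
    _ = ∫ ω, T ω ∂P := integral_condExp hm'
end

section
/- Let (Ω, 𝓕, P) be a probability space with Ω a standard Borel space. Let X : Ω → ℝ^p, D : Ω → ℝ taking values in {0, 1}, and T¹, T⁰ : Ω → ℝ nonnegative integrable random variables. Define the observed survival time T = D·T¹ + (1 − D)·T⁰. Let C : Ω → ℝ be independent of the random vector (T¹, T⁰, D, X), and define Y = min(T, C), Δ = 1{T ≤ C}, and K(u) = P(C ≥ u), with K(T) > 0 almost surely. Let π : ℝ^p → ℝ be measurable with 0 < π(X) ≤ 1 almost surely and E[D | σ(X)] = π(X) almost surely, and assume D and T¹ are conditionally independent given σ(X). Assume D·Δ·Y/(π(X)·K(Y)) is integrable. Then E[D · Δ · Y / (π(X) · K(Y))] = E[T¹]. -/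
open MeasureTheory ProbabilityTheory

open Set


private lemma aux_indepFun_condexpKernel
    {Ω : Type*} {m : MeasurableSpace Ω} [mΩ : MeasurableSpace Ω] [StandardBorelSpace Ω]
    {μ : Measure Ω} [IsProbabilityMeasure μ] (hm : m ≤ mΩ)
    {D T : Ω → ℝ} (hD : Measurable D) (hT : Measurable T)
    (hci : CondIndepFun m hm D T μ) :
    ∀ᵐ ω ∂μ, IndepFun D T (condExpKernel μ m ω) := by
  have hall : ∀ᵐ ω ∂μ, ∀ q r : ℚ,
      condExpKernel μ m ω (D ⁻¹' Iic (q:ℝ) ∩ T ⁻¹' Iic (r:ℝ))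
        = condExpKernel μ m ω (D ⁻¹' Iic (q:ℝ)) * condExpKernel μ m ω (T ⁻¹' Iic (r:ℝ)) := by
    rw [ae_all_iff]
    intro q
    rw [ae_all_iff]
    intro r
    exact ae_of_ae_trim hm
      (hci (D ⁻¹' Iic (q:ℝ)) (T ⁻¹' Iic (r:ℝ))
        ⟨Iic (q:ℝ), measurableSet_Iic, rfl⟩ ⟨Iic (r:ℝ), measurableSet_Iic, rfl⟩)
  filter_upwards [hall] with ω hω
  have hgen : (Real.measurableSpace : MeasurableSpace ℝ)
      = MeasurableSpace.generateFrom (⋃ a : ℚ, {Iic (a : ℝ)}) :=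
    Real.borel_eq_generateFrom_Iic_rat
  refine IndepSets.indep (hD.comap_le) (hT.comap_le)
    (Real.isPiSystem_Iic_rat.comap D) (Real.isPiSystem_Iic_rat.comap T) ?_ ?_ ?_
  · rw [hgen, MeasurableSpace.comap_generateFrom]; rfl
  · rw [hgen, MeasurableSpace.comap_generateFrom]; rfl
  · rintro t1 t2 ⟨s1, hs1, rfl⟩ ⟨s2, hs2, rfl⟩
    simp only [mem_iUnion, mem_singleton_iff] at hs1 hs2
    obtain ⟨q, rfl⟩ := hs1
    obtain ⟨r, rfl⟩ := hs2
    exact Filter.Eventually.of_forall fun _ => hω q r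

private lemma condexp_mul_of_condIndepFun'
    {Ω : Type*} {m : MeasurableSpace Ω} [mΩ : MeasurableSpace Ω] [StandardBorelSpace Ω]
    {μ : Measure Ω} [IsProbabilityMeasure μ] (hm : m ≤ mΩ)
    {D T : Ω → ℝ} (hD : Measurable D) (hT : Measurable T)
    (hDT : Integrable (fun ω => D ω * T ω) μ)
    (hDint : Integrable D μ) (hTint : Integrable T μ)
    (hci : CondIndepFun m hm D T μ) :
    μ[fun ω => D ω * T ω | m] =ᵐ[μ] fun ω => (μ[D|m]) ω * (μ[T|m]) ω := by
  have h1 := aux_indepFun_condexpKernel hm hD hT hci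
  have hA := condExp_ae_eq_integral_condExpKernel hm hDT
  have hB := condExp_ae_eq_integral_condExpKernel hm hDint
  have hC := condExp_ae_eq_integral_condExpKernel hm hTint
  filter_upwards [h1, hA, hB, hC] with ω h1ω hAω hBω hCω
  rw [hAω, hBω, hCω]
  exact h1ω.integral_fun_mul_eq_mul_integral hD.aestronglyMeasurable hT.aestronglyMeasurable

private lemma indep_integral_fubini {α β Ω : Type*} [MeasurableSpace α] [MeasurableSpace β]
    [MeasurableSpace Ω] (μ : Measure Ω) [IsProbabilityMeasure μ]
    {W : Ω → α} {C : Ω → β} (hW : Measurable W) (hC : Measurable C)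
    (hind : IndepFun W C μ) {F : α × β → ℝ} (hF : Measurable F)
    (hFint : Integrable (fun ω => F (W ω, C ω)) μ) :
    ∫ ω, F (W ω, C ω) ∂μ = ∫ w, ∫ c, F (w, c) ∂(μ.map C) ∂(μ.map W)
      ∧ Integrable (fun w => ∫ c, F (w, c) ∂(μ.map C)) (μ.map W) := by
  have hmap : μ.map (fun ω => (W ω, C ω)) = (μ.map W).prod (μ.map C) :=
    (indepFun_iff_map_prod_eq_prod_map_map hW.aemeasurable hC.aemeasurable).mp hind
  have hFint' : Integrable F ((μ.map W).prod (μ.map C)) := by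
    rw [← hmap]
    exact (integrable_map_measure hF.aestronglyMeasurable (hW.prodMk hC).aemeasurable).mpr hFint
  constructor
  · rw [← MeasureTheory.integral_prod F hFint', ← hmap,
      integral_map (hW.prodMk hC).aemeasurable hF.aestronglyMeasurable]
  · exact hFint'.integral_prod_left

/-- **treated-arm identification under censoring, Case 1 of double robustness.**
On a standard Borel probability space, let `X : Ω → ℝ^p` be covariates, `D` a binary treatment
indicator, and `T¹, T⁰` nonnegative integrable potential survival times. The observed survival
time is `T = D·T¹ + (1 − D)·T⁰` (consistency). Let `C` be a censoring time independent of
`(T¹, T⁰, D, X)` (non-informative censoring), `Y = min(T, C)` the observed time,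
`Δ = 1{T ≤ C}` the censoring indicator, and `K u = P(C ≥ u)` the censoring survival function,
with `K(T) > 0` a.s. Let `π` be a measurable propensity score with `0 < π(X) ≤ 1` a.s. and
`E[D | σ(X)] = π(X)` a.s. (correct specification), and assume `D` and `T¹` are conditionally
independent given `σ(X)` (unconfoundedness). If `D·Δ·Y/(π(X)·K(Y))` is integrable, then
`E[D·Δ·Y/(π(X)·K(Y))] = E[T¹]`. -/
theorem ipw_ipcw_identification_treated
    {Ω : Type*} [MeasurableSpace Ω] [StandardBorelSpace Ω]
    (P : Measure Ω) [IsProbabilityMeasure P]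
    {p : ℕ} (X : Ω → EuclideanSpace ℝ (Fin p)) (hX : Measurable X)
    (D : Ω → ℝ) (hD : Measurable D) (hD01 : ∀ ω, D ω = 0 ∨ D ω = 1)
    (T1 T0 : Ω → ℝ) (hT1 : Measurable T1) (hT0 : Measurable T0)
    (hT1pos : ∀ᵐ ω ∂P, 0 ≤ T1 ω) (hT0pos : ∀ᵐ ω ∂P, 0 ≤ T0 ω)
    (hT1int : Integrable T1 P) (hT0int : Integrable T0 P)
    (T : Ω → ℝ) (hTdef : ∀ ω, T ω = D ω * T1 ω + (1 - D ω) * T0 ω)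
    (C : Ω → ℝ) (hC : Measurable C)
    (hCindep : IndepFun C (fun ω => (T1 ω, T0 ω, D ω, X ω)) P)
    (Y : Ω → ℝ) (hYdef : ∀ ω, Y ω = min (T ω) (C ω))
    (K : ℝ → ℝ) (hK : ∀ u, K u = (P {ω | u ≤ C ω}).toReal)
    (hKT : ∀ᵐ ω ∂P, 0 < K (T ω))
    (π : EuclideanSpace ℝ (Fin p) → ℝ) (hπ : Measurable π)
    (hπpos : ∀ᵐ ω ∂P, 0 < π (X ω) ∧ π (X ω) ≤ 1)
    (hps : P[D | MeasurableSpace.comap X inferInstance] =ᵐ[P] fun ω => π (X ω))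
    (hci : CondIndepFun (MeasurableSpace.comap X inferInstance) hX.comap_le D T1 P)
    (hint : Integrable
      (fun ω => D ω * (if T ω ≤ C ω then (1 : ℝ) else 0) * Y ω / (π (X ω) * K (Y ω))) P) :
    ∫ ω, D ω * (if T ω ≤ C ω then (1 : ℝ) else 0) * Y ω / (π (X ω) * K (Y ω)) ∂P
      = ∫ ω, T1 ω ∂P := by
  classical
  have hKanti : Antitone K := by
    intro u v huv
    rw [hK, hK]
    exact ENNReal.toReal_mono (measure_ne_top P _)
      (measure_mono fun ω hω => le_trans huv hω)
  have hKmeas : Measurable K := hKanti.measurable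
  set W : Ω → ℝ × ℝ × ℝ × EuclideanSpace ℝ (Fin p) := fun ω => (T1 ω, T0 ω, D ω, X ω)
    with hWdef
  have hW : Measurable W := hT1.prodMk (hT0.prodMk (hD.prodMk hX))
  set φ : ℝ × ℝ × ℝ × EuclideanSpace ℝ (Fin p) → ℝ :=
    fun w => w.2.2.1 * w.1 / (π w.2.2.2 * K w.1) with hφdef
  have hφ : Measurable φ :=
    (measurable_snd.snd.fst.mul measurable_fst).div
      ((hπ.comp measurable_snd.snd.snd).mul (hKmeas.comp measurable_fst))
  set F : (ℝ × ℝ × ℝ × EuclideanSpace ℝ (Fin p)) × ℝ → ℝ :=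
    fun z => (if z.1.1 ≤ z.2 then (1:ℝ) else 0) * φ z.1 with hFdef
  have hF : Measurable F := by
    refine Measurable.mul ?_ (hφ.comp measurable_fst)
    exact Measurable.ite (measurableSet_le measurable_fst.fst measurable_snd)
      measurable_const measurable_const
  -- Step A: pointwise identification of the integrand
  have hstepA : ∀ ω, D ω * (if T ω ≤ C ω then (1:ℝ) else 0) * Y ω / (π (X ω) * K (Y ω))
      = F (W ω, C ω) := by
    intro ω
    simp only [hFdef, hφdef, hWdef]
    rcases hD01 ω with h0 | h1
    · rw [h0]; simp
    · have hTT : T ω = T1 ω := by rw [hTdef, h1]; ring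
      rw [hYdef, hTT, h1]
      by_cases hTC : T1 ω ≤ C ω
      · simp [hTC, min_eq_left hTC]
      · simp [hTC]
  have hg_int : Integrable (fun ω => F (W ω, C ω)) P :=
    hint.congr (Filter.Eventually.of_forall hstepA)
  obtain ⟨hfub1, hfub2⟩ := indep_integral_fubini P hW hC hCindep.symm hF hg_int
  -- inner integral computation
  have hinner : ∀ w : ℝ × ℝ × ℝ × EuclideanSpace ℝ (Fin p),
      ∫ c, F (w, c) ∂(P.map C) = φ w * K w.1 := by
    intro w
    simp only [hFdef]
    rw [integral_mul_const]
    have hindic : (fun c : ℝ => if w.1 ≤ c then (1:ℝ) else 0)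
        = Set.indicator (Set.Ici w.1) (1 : ℝ → ℝ) := by
      funext c; by_cases h : w.1 ≤ c <;> simp [Set.indicator, Set.mem_Ici, h]
    rw [hindic, integral_indicator_one measurableSet_Ici, measureReal_def,
      Measure.map_apply hC measurableSet_Ici]
    have hpre : C ⁻¹' Set.Ici w.1 = {ω | w.1 ≤ C ω} := rfl
    rw [hpre, ← hK w.1, mul_comm]
  have hmeasφK : Measurable fun w : ℝ × ℝ × ℝ × EuclideanSpace ℝ (Fin p) => φ w * K w.1 :=
    hφ.mul (hKmeas.comp measurable_fst)
  have hφWint : Integrable (fun ω => φ (W ω) * K (T1 ω)) P := by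
    have h1 : Integrable (fun w => φ w * K w.1) (P.map W) :=
      hfub2.congr (Filter.Eventually.of_forall hinner)
    exact (integrable_map_measure hmeasφK.aestronglyMeasurable hW.aemeasurable).mp h1
  -- Step C: a.e. simplification
  have heqC : (fun ω => φ (W ω) * K (T1 ω))
      =ᵐ[P] (fun ω => (π (X ω))⁻¹ * (D ω * T1 ω)) := by
    filter_upwards [hKT] with ω hKω
    simp only [hφdef, hWdef]
    rcases hD01 ω with h0 | h1
    · rw [h0]; simp
    · have hTT : T ω = T1 ω := by rw [hTdef, h1]; ring
      rw [hTT] at hKω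
      rw [h1]
      simp only [one_mul]
      rw [div_mul_eq_mul_div, mul_div_mul_right _ _ (ne_of_gt hKω), inv_mul_eq_div]
  have hhint : Integrable (fun ω => (π (X ω))⁻¹ * (D ω * T1 ω)) P := hφWint.congr heqC
  -- Step D: conditional expectation argument
  have hmle : MeasurableSpace.comap X inferInstance ≤ _ := hX.comap_le
  have hDT1 : Integrable (fun ω => D ω * T1 ω) P := by
    refine hT1int.norm.mono' ((hD.mul hT1).aestronglyMeasurable)
      (Filter.Eventually.of_forall fun ω => ?_)
    rcases hD01 ω with h0 | h0 <;> simp [h0, norm_mul, abs_mul]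
  have hDint : Integrable D P := by
    refine (integrable_const (1:ℝ)).mono' hD.aestronglyMeasurable
      (Filter.Eventually.of_forall fun ω => ?_)
    rcases hD01 ω with h0 | h0 <;> simp [h0]
  have hXm : Measurable[MeasurableSpace.comap X inferInstance] X := fun s hs => ⟨s, hs, rfl⟩
  have hψm : StronglyMeasurable[MeasurableSpace.comap X inferInstance]
      (fun ω => (π (X ω))⁻¹) := ((hπ.comp hXm).inv).stronglyMeasurable
  have hpull := condExp_mul_of_stronglyMeasurable_left (μ := P) hψm hhint hDT1
  have hprod := condexp_mul_of_condIndepFun' (m := MeasurableSpace.comap X inferInstance)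
    hX.comap_le hD hT1 hDT1 hDint hT1int hci
  have hce : P[(fun ω => (π (X ω))⁻¹ * (D ω * T1 ω)) | MeasurableSpace.comap X inferInstance]
      =ᵐ[P] P[T1 | MeasurableSpace.comap X inferInstance] := by
    have hfuneq : (fun ω : Ω => (π (X ω))⁻¹ * (D ω * T1 ω))
        = ((fun ω => (π (X ω))⁻¹) * fun ω => D ω * T1 ω) := rfl
    rw [hfuneq]
    filter_upwards [hpull, hprod, hps, hπpos] with ω e1 e2 e3 e4
    rw [e1]
    simp only [Pi.mul_apply]
    rw [e2, e3]
    exact inv_mul_cancel_left₀ (ne_of_gt e4.1) _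
  calc ∫ ω, D ω * (if T ω ≤ C ω then (1:ℝ) else 0) * Y ω / (π (X ω) * K (Y ω)) ∂P
      = ∫ ω, F (W ω, C ω) ∂P := integral_congr_ae (Filter.Eventually.of_forall hstepA)
    _ = ∫ w, ∫ c, F (w, c) ∂(P.map C) ∂(P.map W) := hfub1
    _ = ∫ w, φ w * K w.1 ∂(P.map W) :=
        integral_congr_ae (Filter.Eventually.of_forall hinner)
    _ = ∫ ω, φ (W ω) * K ((W ω).1) ∂P :=
        integral_map hW.aemeasurable hmeasφK.aestronglyMeasurable
    _ = ∫ ω, (π (X ω))⁻¹ * (D ω * T1 ω) ∂P := integral_congr_ae heqC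
    _ = ∫ ω, (P[(fun ω => (π (X ω))⁻¹ * (D ω * T1 ω)) |
          MeasurableSpace.comap X inferInstance]) ω ∂P :=
        (integral_condExp hX.comap_le).symm
    _ = ∫ ω, (P[T1 | MeasurableSpace.comap X inferInstance]) ω ∂P := integral_congr_ae hce
    _ = ∫ ω, T1 ω ∂P := integral_condExp hX.comap_le
end

section
/- Let (Ω, 𝓕, P) be a probability space with Ω a standard Borel space. Let X : Ω → ℝ^p, D : Ω → ℝ taking values in {0, 1}, and T¹, T⁰ : Ω → ℝ nonnegative integrable random variables. Define the observed survival time T = D·T¹ + (1 − D)·T⁰. Let C : Ω → ℝ be independent of the random vector (T¹, T⁰, D, X), and define Y = min(T, C), Δ = 1{T ≤ C}, and K(u) = P(C ≥ u), with K(T) > 0 almost surely. Let π : ℝ^p → ℝ be measurable with 0 ≤ π(X) < 1 almost surely and E[D | σ(X)] = π(X) almost surely, and assume D and T⁰ are conditionally independent given σ(X). Assume (1 − D)·Δ·Y/((1 − π(X))·K(Y)) is integrable. Then E[(1 − D) · Δ · Y / ((1 − π(X)) · K(Y))] = E[T⁰]. -/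
open MeasureTheory ProbabilityTheory

lemma aux_div_mul_cancel {x a k : ℝ} (hk : k ≠ 0) : x / (a * k) * k = x / a := by
  rcases eq_or_ne a 0 with h | h
  · simp [h]
  · field_simp

/-- Weight function on the codomain of `(T1, T0, D, X)`. -/
noncomputable def ipwG {E : Type*} (π : E → ℝ) (K : ℝ → ℝ) (v : ℝ × ℝ × ℝ × E) : ℝ :=
  (1 - v.2.2.1) * v.2.1 / ((1 - π v.2.2.2) * K v.2.1)

/-- Weight function including the censoring indicator. -/
noncomputable def ipwF {E : Type*} (π : E → ℝ) (K : ℝ → ℝ) (z : ℝ × (ℝ × ℝ × ℝ × E)) : ℝ :=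
  ipwG π K z.2 * (if z.2.2.1 ≤ z.1 then 1 else 0)
lemma condexp_mul_ae_eq_of_condIndepFun
    {Ω : Type*} {m' : MeasurableSpace Ω} [mΩ : MeasurableSpace Ω] [StandardBorelSpace Ω]
    {P : Measure Ω} [IsProbabilityMeasure P]
    (hm' : m' ≤ mΩ)
    {f g : Ω → ℝ} (hf : Measurable f) (hg : Measurable g)
    (hfi : Integrable f P) (hgi : Integrable g P)
    (hfgi : Integrable (fun ω => f ω * g ω) P)
    (hci : CondIndepFun m' hm' f g P) :
    P[fun ω => f ω * g ω | m'] =ᵐ[P]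
      fun ω => (P[f | m']) ω * (P[g | m']) ω := by
  haveI : Nonempty Ω := P.nonempty_of_neZero
  have hae : ∀ᵐ ω ∂P, ∀ q r : ℚ,
      condExpKernel P m' ω (f ⁻¹' Set.Iic (q:ℝ) ∩ g ⁻¹' Set.Iic (r:ℝ))
        = condExpKernel P m' ω (f ⁻¹' Set.Iic (q:ℝ)) * condExpKernel P m' ω (g ⁻¹' Set.Iic (r:ℝ)) := by
    rw [ae_all_iff]; intro q; rw [ae_all_iff]; intro r
    exact ae_of_ae_trim hm'
      (hci (f ⁻¹' Set.Iic (q:ℝ)) (g ⁻¹' Set.Iic (r:ℝ))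
        ⟨Set.Iic (q:ℝ), measurableSet_Iic, rfl⟩ ⟨Set.Iic (r:ℝ), measurableSet_Iic, rfl⟩)
  have hindep : ∀ᵐ ω ∂P, IndepFun f g (condExpKernel P m' ω) := by
    filter_upwards [hae] with ω hω
    haveI : IsProbabilityMeasure (condExpKernel P m' ω) := IsMarkovKernel.isProbabilityMeasure ω
    have hgen : ∀ (h : Ω → ℝ), MeasurableSpace.comap h inferInstance
        = MeasurableSpace.generateFrom (Set.range fun q : ℚ => h ⁻¹' Set.Iic (q:ℝ)) := by
      intro h
      have : (inferInstance : MeasurableSpace ℝ) = borel ℝ := BorelSpace.measurable_eq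
      rw [this, Real.borel_eq_generateFrom_Iic_rat, MeasurableSpace.comap_generateFrom]
      congr 1
      ext s
      simp only [Set.image_iUnion, Set.image_singleton, Set.mem_iUnion, Set.mem_singleton_iff,
        Set.mem_range]
      aesop
    have hpi : ∀ (h : Ω → ℝ), IsPiSystem (Set.range fun q : ℚ => h ⁻¹' Set.Iic (q:ℝ)) := by
      rintro h _ ⟨q, rfl⟩ _ ⟨r, rfl⟩ -
      exact ⟨min q r, by simp [← Set.preimage_inter, Set.Iic_inter_Iic, Rat.cast_min]⟩
    show Indep (MeasurableSpace.comap f inferInstance) (MeasurableSpace.comap g inferInstance) (condExpKernel P m' ω)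
    refine IndepSets.indep hf.comap_le hg.comap_le (hpi f) (hpi g) (hgen f) (hgen g) ?_
    rw [IndepSets_iff]
    rintro _ _ ⟨q, rfl⟩ ⟨r, rfl⟩
    exact hω q r
  have h1 := condExp_ae_eq_integral_condExpKernel hm' hfgi
  have h2 := condExp_ae_eq_integral_condExpKernel hm' hfi
  have h3 := condExp_ae_eq_integral_condExpKernel hm' hgi
  filter_upwards [h1, h2, h3, hindep, hfi.condExpKernel_ae, hgi.condExpKernel_ae]
    with ω e1 e2 e3 hind hfint hgint
  rw [e1, e2, e3]
  exact IndepFun.integral_fun_mul_eq_mul_integral hind hfint.1 hgint.1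

lemma ipw_control_integral
    {Ω : Type*} [mΩ : MeasurableSpace Ω] [StandardBorelSpace Ω]
    {P : Measure Ω} [IsProbabilityMeasure P]
    {E : Type*} [MeasurableSpace E]
    {X : Ω → E} (hX : Measurable X)
    {D : Ω → ℝ} (hD : Measurable D) (hD01 : ∀ ω, D ω = 0 ∨ D ω = 1)
    {T0 : Ω → ℝ} (hT0 : Measurable T0) (hT0int : Integrable T0 P)
    {π : E → ℝ} (hπ : Measurable π)
    (hπpos : ∀ᵐ ω ∂P, 0 ≤ π (X ω) ∧ π (X ω) < 1)
    (hps : P[D | MeasurableSpace.comap X inferInstance] =ᵐ[P] fun ω => π (X ω))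
    (hci : CondIndepFun (MeasurableSpace.comap X inferInstance) hX.comap_le D T0 P)
    (hWint : Integrable (fun ω => (1 - π (X ω))⁻¹ * ((1 - D ω) * T0 ω)) P) :
    ∫ ω, (1 - π (X ω))⁻¹ * ((1 - D ω) * T0 ω) ∂P = ∫ ω, T0 ω ∂P := by
  have hm' : MeasurableSpace.comap X inferInstance ≤ mΩ := hX.comap_le
  have hDint : Integrable D P := by
    refine Integrable.mono' (integrable_const 1) hD.aestronglyMeasurable ?_
    filter_upwards with ω
    rcases hD01 ω with h | h <;> simp [h]
  have hDT0int : Integrable (fun ω => D ω * T0 ω) P := by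
    refine Integrable.mono' hT0int.abs (hD.mul hT0).aestronglyMeasurable ?_
    filter_upwards with ω
    rcases hD01 ω with h | h <;> simp [h, Real.norm_eq_abs, abs_nonneg, le_refl]
  have h1mDT0int : Integrable (fun ω => (1 - D ω) * T0 ω) P := by
    have h := hT0int.sub hDT0int
    refine h.congr (Filter.Eventually.of_forall fun ω => ?_)
    simp only [Pi.sub_apply]; ring
  have hkey := condexp_mul_ae_eq_of_condIndepFun hm' hD hT0 hDint hT0int hDT0int hci
  have hsm : StronglyMeasurable[MeasurableSpace.comap X inferInstance] (fun ω => (1 - π (X ω))⁻¹) :=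
    (((measurable_const.sub hπ).inv).comp (comap_measurable X)).stronglyMeasurable
  have hA : P[fun ω => (1 - π (X ω))⁻¹ * ((1 - D ω) * T0 ω)|MeasurableSpace.comap X inferInstance] =ᵐ[P]
      fun ω => (1 - π (X ω))⁻¹ * (P[fun ω => (1 - D ω) * T0 ω|MeasurableSpace.comap X inferInstance]) ω :=
    condExp_mul_of_stronglyMeasurable_left hsm hWint h1mDT0int
  have hB : P[fun ω => (1 - D ω) * T0 ω|MeasurableSpace.comap X inferInstance] =ᵐ[P]
      fun ω => (1 - π (X ω)) * (P[T0|MeasurableSpace.comap X inferInstance]) ω := by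
    have e : (fun ω => (1 - D ω) * T0 ω) = fun ω => T0 ω - D ω * T0 ω := by
      funext ω; ring
    rw [e]
    have h2 : P[fun ω => T0 ω - D ω * T0 ω|MeasurableSpace.comap X inferInstance] =ᵐ[P]
        fun ω => (P[T0|MeasurableSpace.comap X inferInstance]) ω - (P[fun ω => D ω * T0 ω|MeasurableSpace.comap X inferInstance]) ω :=
      condExp_sub hT0int hDT0int _
    filter_upwards [h2, hkey, hps] with ω h2ω hkω hpω
    rw [h2ω, hkω, hpω]
    ring
  have hchain : P[fun ω => (1 - π (X ω))⁻¹ * ((1 - D ω) * T0 ω)|MeasurableSpace.comap X inferInstance] =ᵐ[P] P[T0|MeasurableSpace.comap X inferInstance] := by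
    filter_upwards [hA, hB, hπpos] with ω h1 h2 h3
    rw [h1, h2]
    exact inv_mul_cancel_left₀ (ne_of_gt (sub_pos.mpr h3.2)) _
  calc ∫ ω, (1 - π (X ω))⁻¹ * ((1 - D ω) * T0 ω) ∂P
      = ∫ ω, (P[fun ω => (1 - π (X ω))⁻¹ * ((1 - D ω) * T0 ω)|MeasurableSpace.comap X inferInstance]) ω ∂P :=
        (integral_condExp hm').symm
    _ = ∫ ω, (P[T0|MeasurableSpace.comap X inferInstance]) ω ∂P := integral_congr_ae hchain
    _ = ∫ ω, T0 ω ∂P := integral_condExp hm'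

/-- **control-arm identification under censoring, Case 1 of double robustness.**
On a standard Borel probability space, let `X : Ω → ℝ^p` be covariates, `D` a binary treatment
indicator, and `T¹, T⁰` nonnegative integrable potential survival times. The observed survival
time is `T = D·T¹ + (1 − D)·T⁰` (consistency). Let `C` be a censoring time independent of
`(T¹, T⁰, D, X)` (non-informative censoring), `Y = min(T, C)` the observed time,
`Δ = 1{T ≤ C}` the censoring indicator, and `K u = P(C ≥ u)` the censoring survival function,
with `K(T) > 0` a.s. Let `π` be a measurable propensity score with `0 ≤ π(X) < 1` a.s. and
`E[D | σ(X)] = π(X)` a.s. (correct specification), and assume `D` and `T⁰` are conditionally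
independent given `σ(X)` (unconfoundedness). If `(1 − D)·Δ·Y/((1 − π(X))·K(Y))` is
integrable, then `E[(1 − D)·Δ·Y/((1 − π(X))·K(Y))] = E[T⁰]`. -/
theorem ipw_ipcw_identification_control
    {Ω : Type*} [MeasurableSpace Ω] [StandardBorelSpace Ω]
    (P : Measure Ω) [IsProbabilityMeasure P]
    {p : ℕ} (X : Ω → EuclideanSpace ℝ (Fin p)) (hX : Measurable X)
    (D : Ω → ℝ) (hD : Measurable D) (hD01 : ∀ ω, D ω = 0 ∨ D ω = 1)
    (T1 T0 : Ω → ℝ) (hT1 : Measurable T1) (hT0 : Measurable T0)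
    (hT1pos : ∀ᵐ ω ∂P, 0 ≤ T1 ω) (hT0pos : ∀ᵐ ω ∂P, 0 ≤ T0 ω)
    (hT1int : Integrable T1 P) (hT0int : Integrable T0 P)
    (T : Ω → ℝ) (hTdef : ∀ ω, T ω = D ω * T1 ω + (1 - D ω) * T0 ω)
    (C : Ω → ℝ) (hC : Measurable C)
    (hCindep : IndepFun C (fun ω => (T1 ω, T0 ω, D ω, X ω)) P)
    (Y : Ω → ℝ) (hYdef : ∀ ω, Y ω = min (T ω) (C ω))
    (K : ℝ → ℝ) (hK : ∀ u, K u = (P {ω | u ≤ C ω}).toReal)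
    (hKT : ∀ᵐ ω ∂P, 0 < K (T ω))
    (π : EuclideanSpace ℝ (Fin p) → ℝ) (hπ : Measurable π)
    (hπpos : ∀ᵐ ω ∂P, 0 ≤ π (X ω) ∧ π (X ω) < 1)
    (hps : P[D | MeasurableSpace.comap X inferInstance] =ᵐ[P] fun ω => π (X ω))
    (hci : CondIndepFun (MeasurableSpace.comap X inferInstance) hX.comap_le D T0 P)
    (hint : Integrable
      (fun ω => (1 - D ω) * (if T ω ≤ C ω then (1 : ℝ) else 0) * Y ω
        / ((1 - π (X ω)) * K (Y ω))) P) :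
    ∫ ω, (1 - D ω) * (if T ω ≤ C ω then (1 : ℝ) else 0) * Y ω
        / ((1 - π (X ω)) * K (Y ω)) ∂P
      = ∫ ω, T0 ω ∂P := by
  have hV : Measurable (fun ω => (T1 ω, T0 ω, D ω, X ω)) :=
    hT1.prodMk (hT0.prodMk (hD.prodMk hX))
  have hKanti : Antitone K := by
    intro u u' huu'
    rw [hK, hK]
    exact ENNReal.toReal_mono (measure_ne_top P _)
      (measure_mono fun ω hω => le_trans huu' hω)
  have hKmeas : Measurable K := hKanti.measurable
  have hGmeas : Measurable (ipwG π K) :=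
    ((measurable_const.sub measurable_snd.snd.fst).mul measurable_snd.fst).div
      ((measurable_const.sub (hπ.comp measurable_snd.snd.snd)).mul
        (hKmeas.comp measurable_snd.fst))
  have hFmeas : Measurable (ipwF π K) :=
    (hGmeas.comp measurable_snd).mul
      (Measurable.ite (measurableSet_le measurable_snd.snd.fst measurable_fst)
        measurable_const measurable_const)
  -- pointwise identification of the integrand
  have claim1 : ∀ ω, (1 - D ω) * (if T ω ≤ C ω then (1 : ℝ) else 0) * Y ω
      / ((1 - π (X ω)) * K (Y ω)) = ipwF π K (C ω, (T1 ω, T0 ω, D ω, X ω)) := by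
    intro ω
    simp only [ipwF, ipwG]
    rcases hD01 ω with h | h
    · have hT' : T ω = T0 ω := by rw [hTdef, h]; ring
      by_cases hTC : T ω ≤ C ω
      · have hT0C : T0 ω ≤ C ω := hT' ▸ hTC
        have hY : Y ω = T0 ω := by rw [hYdef, min_eq_left hTC, hT']
        rw [if_pos hTC, if_pos hT0C, hY, h]
        ring
      · have hT0C : ¬ T0 ω ≤ C ω := fun hc => hTC (by rw [hT']; exact hc)
        rw [if_neg hTC, if_neg hT0C, h]
        ring
    · rw [h]
      ring
  have hint' : Integrable (fun ω => ipwF π K (C ω, (T1 ω, T0 ω, D ω, X ω))) P :=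
    hint.congr (Filter.Eventually.of_forall claim1)
  have hCVmeas : Measurable (fun ω => (C ω, (T1 ω, T0 ω, D ω, X ω))) := hC.prodMk hV
  have hmap : P.map (fun ω => (C ω, (T1 ω, T0 ω, D ω, X ω)))
      = (P.map C).prod (P.map (fun ω => (T1 ω, T0 ω, D ω, X ω))) :=
    (indepFun_iff_map_prod_eq_prod_map_map hC.aemeasurable hV.aemeasurable).mp hCindep
  have hFint : Integrable (ipwF π K)
      ((P.map C).prod (P.map (fun ω => (T1 ω, T0 ω, D ω, X ω)))) := by
    rw [← hmap, integrable_map_measure hFmeas.aestronglyMeasurable hCVmeas.aemeasurable]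
    exact hint'
  -- integrating out the censoring variable
  have step4 : ∀ v : ℝ × ℝ × ℝ × EuclideanSpace ℝ (Fin p),
      ∫ c, ipwF π K (c, v) ∂(P.map C) = ipwG π K v * K v.2.1 := by
    intro v
    have e : (fun c => ipwF π K (c, v))
        = fun c => ipwG π K v * (Set.Ici v.2.1).indicator (fun _ => (1:ℝ)) c := by
      funext c
      simp [ipwF, Set.indicator_apply, Set.mem_Ici]
    rw [e, integral_const_mul, integral_indicator_const (1:ℝ) measurableSet_Ici,
      map_measureReal_apply hC measurableSet_Ici]
    have : C ⁻¹' Set.Ici v.2.1 = {ω | v.2.1 ≤ C ω} := rfl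
    rw [this, smul_eq_mul, mul_one, measureReal_def, ← hK]
  have hGKmeas : Measurable (fun v : ℝ × ℝ × ℝ × EuclideanSpace ℝ (Fin p) =>
      ipwG π K v * K v.2.1) := hGmeas.mul (hKmeas.comp measurable_snd.fst)
  -- a.e. identification of the integrated-out weight
  have step6 : (fun ω => ipwG π K (T1 ω, T0 ω, D ω, X ω) * K (T0 ω)) =ᵐ[P]
      fun ω => (1 - π (X ω))⁻¹ * ((1 - D ω) * T0 ω) := by
    filter_upwards [hKT] with ω hKω
    rcases hD01 ω with h | h
    · have hT' : T ω = T0 ω := by rw [hTdef, h]; ring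
      have hk : K (T0 ω) ≠ 0 := by rw [← hT']; exact ne_of_gt hKω
      simp only [ipwG, h]
      rw [aux_div_mul_cancel hk, div_eq_mul_inv]
      ring
    · simp only [ipwG, h]
      ring
  -- integrability of the weight
  have hWint : Integrable (fun ω => (1 - π (X ω))⁻¹ * ((1 - D ω) * T0 ω)) P := by
    have h1 : Integrable (fun v => ∫ c, ipwF π K (c, v) ∂(P.map C))
        (P.map (fun ω => (T1 ω, T0 ω, D ω, X ω))) := hFint.integral_prod_right
    have h2 : Integrable (fun v : ℝ × ℝ × ℝ × EuclideanSpace ℝ (Fin p) =>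
        ipwG π K v * K v.2.1) (P.map (fun ω => (T1 ω, T0 ω, D ω, X ω))) :=
      h1.congr (Filter.Eventually.of_forall step4)
    have h3 : Integrable (fun ω => ipwG π K (T1 ω, T0 ω, D ω, X ω) * K (T0 ω)) P :=
      (integrable_map_measure hGKmeas.aestronglyMeasurable hV.aemeasurable).mp h2
    exact h3.congr step6
  -- chain everything together
  calc ∫ ω, (1 - D ω) * (if T ω ≤ C ω then (1 : ℝ) else 0) * Y ω
        / ((1 - π (X ω)) * K (Y ω)) ∂P
      = ∫ ω, ipwF π K (C ω, (T1 ω, T0 ω, D ω, X ω)) ∂P :=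
        integral_congr_ae (Filter.Eventually.of_forall claim1)
    _ = ∫ z, ipwF π K z
          ∂((P.map C).prod (P.map (fun ω => (T1 ω, T0 ω, D ω, X ω)))) := by
        rw [← hmap, integral_map hCVmeas.aemeasurable hFmeas.aestronglyMeasurable]
    _ = ∫ c, ∫ v, ipwF π K (c, v)
          ∂(P.map (fun ω => (T1 ω, T0 ω, D ω, X ω))) ∂(P.map C) :=
        integral_prod _ hFint
    _ = ∫ v, ∫ c, ipwF π K (c, v)
          ∂(P.map C) ∂(P.map (fun ω => (T1 ω, T0 ω, D ω, X ω))) :=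
        integral_integral_swap hFint
    _ = ∫ v, ipwG π K v * K v.2.1
          ∂(P.map (fun ω => (T1 ω, T0 ω, D ω, X ω))) :=
        integral_congr_ae (Filter.Eventually.of_forall step4)
    _ = ∫ ω, ipwG π K (T1 ω, T0 ω, D ω, X ω) * K (T0 ω) ∂P :=
        integral_map hV.aemeasurable hGKmeas.aestronglyMeasurable
    _ = ∫ ω, (1 - π (X ω))⁻¹ * ((1 - D ω) * T0 ω) ∂P := integral_congr_ae step6
    _ = ∫ ω, T0 ω ∂P :=
        ipw_control_integral hX hD hD01 hT0 hT0int hπ hπpos hps hci hWint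
end

section
/- Let (Ω, 𝓕, P) be a probability space with Ω a standard Borel space. Let X : Ω → ℝ^p, D : Ω → ℝ taking values in {0, 1}, and T¹, T⁰ : Ω → ℝ nonnegative integrable random variables. Define the observed survival time T = D·T¹ + (1 − D)·T⁰. Let C : Ω → ℝ be independent of the random vector (T¹, T⁰, D, X), and define Y = min(T, C), Δ = 1{T ≤ C}, and K(u) = P(C ≥ u), with K(T) > 0 almost surely. Let π : ℝ^p → ℝ be measurable with 0 < π(X) < 1 almost surely and E[D | σ(X)] = π(X) almost surely, and assume D is conditionally independent of the pair (T¹, T⁰) given σ(X). Assume D·Δ·Y/(π(X)·K(Y)) and (1 − D)·Δ·Y/((1 − π(X))·K(Y)) are integrable. Then E[D·Δ·Y/(π(X)·K(Y))] − E[(1 − D)·Δ·Y/((1 − π(X))·K(Y))] = E[T¹] − E[T⁰], i.e., the population inverse-probability-weighted contrast identifies the average treatment effect δ = E[T^{(1)}] − E[T^{(0)}]. -/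
open MeasureTheory ProbabilityTheory


lemma aux_censor {Ω β : Type*} [MeasurableSpace Ω] [MeasurableSpace β]
    (P : Measure Ω) [IsProbabilityMeasure P]
    (C : Ω → ℝ) (hC : Measurable C) (V : Ω → β) (hV : Measurable V)
    (hindep : IndepFun V C P) (Tf G : β → ℝ) (hTf : Measurable Tf) (hG : Measurable G)
    (K : ℝ → ℝ) (hK : ∀ u, K u = (P {ω | u ≤ C ω}).toReal)
    (hint : Integrable (fun ω => (if Tf (V ω) ≤ C ω then (1:ℝ) else 0) * G (V ω)) P) :
    Integrable (fun ω => G (V ω) * K (Tf (V ω))) P ∧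
      ∫ ω, (if Tf (V ω) ≤ C ω then (1:ℝ) else 0) * G (V ω) ∂P
        = ∫ ω, G (V ω) * K (Tf (V ω)) ∂P := by
  have hKanti : Antitone K := by
    intro u u' h
    rw [hK, hK]
    exact ENNReal.toReal_mono (measure_ne_top _ _)
      (measure_mono fun ω hω => le_trans h hω)
  have hKm : Measurable K := hKanti.measurable
  haveI : IsProbabilityMeasure (P.map V) := Measure.isProbabilityMeasure_map hV.aemeasurable
  haveI : IsProbabilityMeasure (P.map C) := Measure.isProbabilityMeasure_map hC.aemeasurable
  set H : β × ℝ → ℝ := fun q => (if Tf q.1 ≤ q.2 then (1:ℝ) else 0) * G q.1 with hHdef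
  have hHm : Measurable H := by
    apply Measurable.mul
    · exact Measurable.ite (measurableSet_le (hTf.comp measurable_fst) measurable_snd)
        measurable_const measurable_const
    · exact hG.comp measurable_fst
  have hpair : Measurable fun ω => (V ω, C ω) := hV.prodMk hC
  have hmap : P.map (fun ω => (V ω, C ω)) = (P.map V).prod (P.map C) :=
    (indepFun_iff_map_prod_eq_prod_map_map hV.aemeasurable hC.aemeasurable).mp hindep
  have hHint : Integrable H ((P.map V).prod (P.map C)) := by
    rw [← hmap, integrable_map_measure hHm.aestronglyMeasurable hpair.aemeasurable]
    exact hint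
  have hpre : ∀ u : ℝ, C ⁻¹' Set.Ici u = {ω | u ≤ C ω} := fun u => rfl
  have hinner : ∀ v : β, ∫ c, H (v, c) ∂(P.map C) = G v * K (Tf v) := by
    intro v
    have h1 : (fun c => H (v, c))
        = fun c => (Set.Ici (Tf v)).indicator (1 : ℝ → ℝ) c * G v := by
      funext c
      by_cases h : Tf v ≤ c <;> simp [hHdef, h, Set.indicator_apply, Set.mem_Ici]
    rw [h1, integral_mul_const, integral_indicator_one measurableSet_Ici, measureReal_def,
      Measure.map_apply hC measurableSet_Ici, hpre, ← hK, mul_comm]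
  constructor
  · have h2 : Integrable (fun v => ∫ c, H (v, c) ∂(P.map C)) (P.map V) :=
      hHint.integral_prod_left
    have h3 : Integrable (fun v => G v * K (Tf v)) (P.map V) :=
      h2.congr (Filter.Eventually.of_forall hinner)
    exact (integrable_map_measure h3.aestronglyMeasurable hV.aemeasurable).mp h3
  · calc ∫ ω, (if Tf (V ω) ≤ C ω then (1:ℝ) else 0) * G (V ω) ∂P
        = ∫ ω, H (V ω, C ω) ∂P := rfl
      _ = ∫ q, H q ∂(P.map fun ω => (V ω, C ω)) :=
          (integral_map hpair.aemeasurable hHm.aestronglyMeasurable).symm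
      _ = ∫ q, H q ∂((P.map V).prod (P.map C)) := by rw [hmap]
      _ = ∫ v, ∫ c, H (v, c) ∂(P.map C) ∂(P.map V) := integral_prod H hHint
      _ = ∫ v, G v * K (Tf v) ∂(P.map V) :=
          integral_congr_ae (Filter.Eventually.of_forall hinner)
      _ = ∫ ω, G (V ω) * K (Tf (V ω)) ∂P :=
          integral_map hV.aemeasurable (hG.mul (hKm.comp hTf)).aestronglyMeasurable

lemma aux_condexp {Ω : Type*} [mΩ : MeasurableSpace Ω] [StandardBorelSpace Ω]
    (P : Measure Ω) [IsProbabilityMeasure P]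
    {E : Type*} [MeasurableSpace E]
    (X : Ω → E) (hX : Measurable X)
    (D : Ω → ℝ) (hD : Measurable D) (hD01 : ∀ ω, D ω = 0 ∨ D ω = 1)
    (Z : Ω → ℝ × ℝ) (hZ : Measurable Z)
    (π : E → ℝ) (hπ : Measurable π)
    (hπbd : ∀ᵐ ω ∂P, ‖π (X ω)‖ ≤ 1)
    (hps : P[D | MeasurableSpace.comap X inferInstance] =ᵐ[P] fun ω => π (X ω))
    (hci : CondIndepFun (MeasurableSpace.comap X inferInstance) hX.comap_le D Z P) :
    (fun ω => π (X ω)) =ᵐ[P]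
      P[D | MeasurableSpace.comap (fun ω => (X ω, Z ω)) inferInstance] := by
  have hV : Measurable[mΩ] fun ω => (X ω, Z ω) := hX.prodMk hZ
  have hmV : (MeasurableSpace.comap (fun ω => (X ω, Z ω)) inferInstance) ≤ mΩ := hV.comap_le
  have hmX : (MeasurableSpace.comap X inferInstance) ≤ mΩ := hX.comap_le
  have hmXV : (MeasurableSpace.comap X inferInstance) ≤ (MeasurableSpace.comap (fun ω => (X ω, Z ω)) inferInstance) := by
    have h1 : MeasurableSpace.comap X (inferInstance : MeasurableSpace E)
        = MeasurableSpace.comap (fun ω => (X ω, Z ω))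
          (MeasurableSpace.comap Prod.fst inferInstance) := by
      rw [MeasurableSpace.comap_comp]; rfl
    rw [h1]
    exact MeasurableSpace.comap_mono (measurable_iff_comap_le.mp measurable_fst)
  -- integrability
  have hDbd : ∀ᵐ ω ∂P, ‖D ω‖ ≤ (fun _ : Ω => (1:ℝ)) ω := by
    filter_upwards with ω
    rcases hD01 ω with h | h <;> simp [h]
  have hDint : Integrable D P :=
    (integrable_const (1:ℝ)).mono' hD.aestronglyMeasurable hDbd
  have hπXm : Measurable[(MeasurableSpace.comap X inferInstance)] fun ω => π (X ω) :=
    hπ.comp (measurable_iff_comap_le.mpr le_rfl)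
  have hπint : Integrable (fun ω => π (X ω)) P :=
    (integrable_const (1:ℝ)).mono' (hπXm.mono hmX le_rfl).aestronglyMeasurable hπbd
  -- the generating π-system
  set R : Set (Set Ω) := Set.preimage (fun ω => (X ω, Z ω)) ''
    Set.image2 (· ×ˢ ·) {s : Set E | MeasurableSet s} {t : Set (ℝ × ℝ) | MeasurableSet t}
    with hRdef
  have hgen : (MeasurableSpace.comap (fun ω => (X ω, Z ω)) inferInstance) = MeasurableSpace.generateFrom R := by
    rw [← generateFrom_prod, MeasurableSpace.comap_generateFrom]
  have hpi : IsPiSystem R := isPiSystem_prod.comap _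
  have huniv : ∫ ω, π (X ω) ∂P = ∫ ω, D ω ∂P := by
    rw [← integral_condExp hmX (μ := P) (f := D)]
    exact integral_congr_ae hps.symm
  have key : ∀ S : Set Ω, MeasurableSet[(MeasurableSpace.comap (fun ω => (X ω, Z ω)) inferInstance)] S →
      ∫ ω in S, π (X ω) ∂P = ∫ ω in S, D ω ∂P := by
    refine MeasurableSpace.induction_on_inter (m := MeasurableSpace.comap (fun ω => (X ω, Z ω)) inferInstance) hgen hpi ?_ ?_ ?_ ?_
    · simp
    · rintro S ⟨B, hB, rfl⟩
      obtain ⟨s, hs, t, ht, rfl⟩ := hB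
      rw [Set.mk_preimage_prod]
      have hsX : MeasurableSet[(MeasurableSpace.comap X inferInstance)] (X ⁻¹' s) := ⟨s, hs, rfl⟩
      have htZ : MeasurableSet[mΩ] (Z ⁻¹' t) := hZ ht
      -- conditional expectation of the indicator of Z⁻¹' t
      set q : Ω → ℝ := P[(Z ⁻¹' t).indicator (fun _ => (1:ℝ)) | (MeasurableSpace.comap X inferInstance)] with hqdef
      have hind_int : Integrable ((Z ⁻¹' t).indicator fun _ => (1:ℝ)) P :=
        (integrable_const (1:ℝ)).indicator htZ
      -- left side
      have hLmul : Integrable ((fun ω => π (X ω)) * (Z ⁻¹' t).indicator fun _ => (1:ℝ)) P := by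
        refine (integrable_const (1:ℝ)).mono'
          ((hπXm.mono hmX le_rfl).aestronglyMeasurable.mul
            (hind_int.aestronglyMeasurable)) ?_
        filter_upwards [hπbd] with ω hω
        simp only [Pi.mul_apply, norm_mul]
        calc ‖π (X ω)‖ * ‖(Z ⁻¹' t).indicator (fun _ => (1:ℝ)) ω‖
            ≤ 1 * 1 := by
              refine mul_le_mul hω ?_ (norm_nonneg _) zero_le_one
              by_cases h : ω ∈ Z ⁻¹' t <;> simp [h]
          _ = 1 := one_mul 1
      have hL : ∫ ω in X ⁻¹' s ∩ Z ⁻¹' t, π (X ω) ∂P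
          = ∫ ω in X ⁻¹' s, π (X ω) * q ω ∂P := by
        rw [← setIntegral_indicator htZ]
        have h1 : ∀ ω, (Z ⁻¹' t).indicator (fun ω' => π (X ω')) ω
            = ((fun ω' => π (X ω')) * (Z ⁻¹' t).indicator fun _ => (1:ℝ)) ω := by
          intro ω
          by_cases h : ω ∈ Z ⁻¹' t <;> simp [h]
        rw [integral_congr_ae (Filter.Eventually.of_forall fun ω => h1 ω)]
        rw [← setIntegral_condExp hmX hLmul hsX]
        refine setIntegral_congr_ae (hmX _ hsX) ?_
        filter_upwards [condExp_mul_of_stronglyMeasurable_left hπXm.stronglyMeasurable hLmul hind_int] with ω hω _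
        exact hω
      -- right side
      have hDind : ∀ ω, (Z ⁻¹' t).indicator D ω
          = (D ⁻¹' {1} ∩ Z ⁻¹' t).indicator (fun _ => (1:ℝ)) ω := by
        intro ω
        rcases hD01 ω with h | h <;>
          by_cases h2 : ω ∈ Z ⁻¹' t <;>
          simp [Set.indicator_apply, h, h2, Set.mem_preimage, Set.mem_singleton_iff]
      have hDZint : Integrable ((D ⁻¹' {1} ∩ Z ⁻¹' t).indicator fun _ => (1:ℝ)) P :=
        (integrable_const (1:ℝ)).indicator ((hD (measurableSet_singleton 1)).inter htZ)
      have hciq : P⟦D ⁻¹' {1} ∩ Z ⁻¹' t | (MeasurableSpace.comap X inferInstance)⟧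
          =ᵐ[P] fun ω => (P⟦D ⁻¹' {1} | (MeasurableSpace.comap X inferInstance)⟧) ω * q ω := by
        exact (condIndepFun_iff_condExp_inter_preimage_eq_mul hD hZ).mp hci
          {1} t (measurableSet_singleton 1) ht
      have hDeq : (D ⁻¹' {1}).indicator (fun _ => (1:ℝ)) = D := by
        funext ω
        rcases hD01 ω with h | h <;>
          simp [Set.indicator_apply, Set.mem_preimage, Set.mem_singleton_iff, h]
      have hD1 : P⟦D ⁻¹' {1} | (MeasurableSpace.comap X inferInstance)⟧ =ᵐ[P] fun ω => π (X ω) := by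
        rw [show ((D ⁻¹' {1}).indicator fun _ => (1:ℝ)) = D from hDeq]
        exact hps
      have hR : ∫ ω in X ⁻¹' s ∩ Z ⁻¹' t, D ω ∂P
          = ∫ ω in X ⁻¹' s, π (X ω) * q ω ∂P := by
        rw [← setIntegral_indicator htZ]
        rw [integral_congr_ae (Filter.Eventually.of_forall hDind)]
        rw [← setIntegral_condExp hmX hDZint hsX]
        refine setIntegral_congr_ae (hmX _ hsX) ?_
        filter_upwards [hciq, hD1] with ω h1 h2 _
        rw [h1, h2]
      rw [hL, hR]
    · intro S hS hSeq
      have h1 := integral_add_compl (hmV _ hS) hπint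
      have h2 := integral_add_compl (hmV _ hS) hDint
      have := huniv
      linarith
    · intro f hdisj hfm hfeq
      rw [integral_iUnion (fun i => hmV _ (hfm i)) hdisj hπint.integrableOn,
        integral_iUnion (fun i => hmV _ (hfm i)) hdisj hDint.integrableOn]
      exact tsum_congr hfeq
  refine (ae_eq_condExp_of_forall_setIntegral_eq hmV hDint
    (fun S _ _ => hπint.integrableOn) (fun S hS _ => key S hS) ?_)
  exact StronglyMeasurable.aestronglyMeasurable ((hπXm.mono hmXV le_rfl).stronglyMeasurable)


/-- **Case 1 of the double robustness theorem: the population IPW contrast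
identifies the ATE.** On a standard Borel probability space, let `X : Ω → ℝ^p` be covariates,
`D` a binary treatment indicator, and `T¹, T⁰` nonnegative integrable potential survival
times. The observed survival time is `T = D·T¹ + (1 − D)·T⁰` (consistency). Let `C` be a
censoring time independent of `(T¹, T⁰, D, X)` (non-informative censoring), `Y = min(T, C)`,
`Δ = 1{T ≤ C}`, and `K u = P(C ≥ u)`, with `K(T) > 0` a.s. Let `π` be a measurable propensity
score with `0 < π(X) < 1` a.s. and `E[D | σ(X)] = π(X)` a.s. (correct specification), and
assume `D` is conditionally independent of the pair `(T¹, T⁰)` given `σ(X)`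
(unconfoundedness). If `D·Δ·Y/(π(X)·K(Y))` and `(1 − D)·Δ·Y/((1 − π(X))·K(Y))` are
integrable, then
`E[D·Δ·Y/(π(X)·K(Y))] − E[(1 − D)·Δ·Y/((1 − π(X))·K(Y))] = E[T¹] − E[T⁰]`,
i.e. the population inverse-probability-weighted contrast identifies the average treatment
effect `δ = E[T^{(1)}] − E[T^{(0)}]`. -/
theorem ipw_contrast_identifies_ate
    {Ω : Type*} [MeasurableSpace Ω] [StandardBorelSpace Ω]
    (P : Measure Ω) [IsProbabilityMeasure P]
    {p : ℕ} (X : Ω → EuclideanSpace ℝ (Fin p)) (hX : Measurable X)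
    (D : Ω → ℝ) (hD : Measurable D) (hD01 : ∀ ω, D ω = 0 ∨ D ω = 1)
    (T1 T0 : Ω → ℝ) (hT1 : Measurable T1) (hT0 : Measurable T0)
    (hT1pos : ∀ᵐ ω ∂P, 0 ≤ T1 ω) (hT0pos : ∀ᵐ ω ∂P, 0 ≤ T0 ω)
    (hT1int : Integrable T1 P) (hT0int : Integrable T0 P)
    (T : Ω → ℝ) (hTdef : ∀ ω, T ω = D ω * T1 ω + (1 - D ω) * T0 ω)
    (C : Ω → ℝ) (hC : Measurable C)
    (hCindep : IndepFun C (fun ω => (T1 ω, T0 ω, D ω, X ω)) P)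
    (Y : Ω → ℝ) (hYdef : ∀ ω, Y ω = min (T ω) (C ω))
    (K : ℝ → ℝ) (hK : ∀ u, K u = (P {ω | u ≤ C ω}).toReal)
    (hKT : ∀ᵐ ω ∂P, 0 < K (T ω))
    (π : EuclideanSpace ℝ (Fin p) → ℝ) (hπ : Measurable π)
    (hπpos : ∀ᵐ ω ∂P, 0 < π (X ω) ∧ π (X ω) < 1)
    (hps : P[D | MeasurableSpace.comap X inferInstance] =ᵐ[P] fun ω => π (X ω))
    (hci : CondIndepFun (MeasurableSpace.comap X inferInstance) hX.comap_le
      D (fun ω => (T1 ω, T0 ω)) P)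
    (hint1 : Integrable
      (fun ω => D ω * (if T ω ≤ C ω then (1 : ℝ) else 0) * Y ω / (π (X ω) * K (Y ω))) P)
    (hint0 : Integrable
      (fun ω => (1 - D ω) * (if T ω ≤ C ω then (1 : ℝ) else 0) * Y ω
        / ((1 - π (X ω)) * K (Y ω))) P) :
    (∫ ω, D ω * (if T ω ≤ C ω then (1 : ℝ) else 0) * Y ω / (π (X ω) * K (Y ω)) ∂P)
      - (∫ ω, (1 - D ω) * (if T ω ≤ C ω then (1 : ℝ) else 0) * Y ω
          / ((1 - π (X ω)) * K (Y ω)) ∂P)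
      = (∫ ω, T1 ω ∂P) - ∫ ω, T0 ω ∂P := by
  classical
  have hKanti : Antitone K := by
    intro u u' h
    rw [hK, hK]
    exact ENNReal.toReal_mono (measure_ne_top _ _)
      (measure_mono fun ω hω => le_trans h hω)
  have hKm : Measurable K := hKanti.measurable
  -- measurability of the building blocks on β = ℝ × ℝ × ℝ × E
  have hV : Measurable fun ω => (T1 ω, T0 ω, D ω, X ω) :=
    hT1.prodMk (hT0.prodMk (hD.prodMk hX))
  have hTf : Measurable fun v : ℝ × ℝ × ℝ × EuclideanSpace ℝ (Fin p) =>
      v.2.2.1 * v.1 + (1 - v.2.2.1) * v.2.1 :=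
    (measurable_snd.snd.fst.mul measurable_fst).add
      ((measurable_const.sub measurable_snd.snd.fst).mul measurable_snd.fst)
  have hG1 : Measurable fun v : ℝ × ℝ × ℝ × EuclideanSpace ℝ (Fin p) =>
      v.2.2.1 * (v.2.2.1 * v.1 + (1 - v.2.2.1) * v.2.1)
        / (π v.2.2.2 * K (v.2.2.1 * v.1 + (1 - v.2.2.1) * v.2.1)) :=
    (measurable_snd.snd.fst.mul hTf).div
      ((hπ.comp measurable_snd.snd.snd).mul (hKm.comp hTf))
  have hG0 : Measurable fun v : ℝ × ℝ × ℝ × EuclideanSpace ℝ (Fin p) =>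
      (1 - v.2.2.1) * (v.2.2.1 * v.1 + (1 - v.2.2.1) * v.2.1)
        / ((1 - π v.2.2.2) * K (v.2.2.1 * v.1 + (1 - v.2.2.1) * v.2.1)) :=
    ((measurable_const.sub measurable_snd.snd.fst).mul hTf).div
      ((measurable_const.sub (hπ.comp measurable_snd.snd.snd)).mul (hKm.comp hTf))
  -- pointwise rewriting of the two integrands
  have hpt1 : ∀ ω, D ω * (if T ω ≤ C ω then (1 : ℝ) else 0) * Y ω / (π (X ω) * K (Y ω))
      = (if D ω * T1 ω + (1 - D ω) * T0 ω ≤ C ω then (1 : ℝ) else 0)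
        * (D ω * (D ω * T1 ω + (1 - D ω) * T0 ω)
          / (π (X ω) * K (D ω * T1 ω + (1 - D ω) * T0 ω))) := by
    intro ω
    rw [← hTdef ω, hYdef ω]
    by_cases h : T ω ≤ C ω
    · simp [h, min_eq_left h]
    · simp [h]
  have hpt0 : ∀ ω, (1 - D ω) * (if T ω ≤ C ω then (1 : ℝ) else 0) * Y ω
        / ((1 - π (X ω)) * K (Y ω))
      = (if D ω * T1 ω + (1 - D ω) * T0 ω ≤ C ω then (1 : ℝ) else 0)
        * ((1 - D ω) * (D ω * T1 ω + (1 - D ω) * T0 ω)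
          / ((1 - π (X ω)) * K (D ω * T1 ω + (1 - D ω) * T0 ω))) := by
    intro ω
    rw [← hTdef ω, hYdef ω]
    by_cases h : T ω ≤ C ω
    · simp [h, min_eq_left h]
    · simp [h]
  -- apply the censoring lemma
  have hint1' : Integrable (fun ω =>
      (if D ω * T1 ω + (1 - D ω) * T0 ω ≤ C ω then (1 : ℝ) else 0)
        * (D ω * (D ω * T1 ω + (1 - D ω) * T0 ω)
          / (π (X ω) * K (D ω * T1 ω + (1 - D ω) * T0 ω)))) P := by
    have := hint1
    rwa [show (fun ω => D ω * (if T ω ≤ C ω then (1 : ℝ) else 0) * Y ω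
        / (π (X ω) * K (Y ω))) = _ from funext hpt1] at this
  have hint0' : Integrable (fun ω =>
      (if D ω * T1 ω + (1 - D ω) * T0 ω ≤ C ω then (1 : ℝ) else 0)
        * ((1 - D ω) * (D ω * T1 ω + (1 - D ω) * T0 ω)
          / ((1 - π (X ω)) * K (D ω * T1 ω + (1 - D ω) * T0 ω)))) P := by
    have := hint0
    rwa [show (fun ω => (1 - D ω) * (if T ω ≤ C ω then (1 : ℝ) else 0) * Y ω
        / ((1 - π (X ω)) * K (Y ω))) = _ from funext hpt0] at this
  obtain ⟨hcen1int, hcen1⟩ := aux_censor P C hC (fun ω => (T1 ω, T0 ω, D ω, X ω)) hV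
    hCindep.symm _ _ hTf hG1 K hK hint1'
  obtain ⟨hcen0int, hcen0⟩ := aux_censor P C hC (fun ω => (T1 ω, T0 ω, D ω, X ω)) hV
    hCindep.symm _ _ hTf hG0 K hK hint0'
  -- simplify the post-censoring integrands
  have hae1 : (fun ω => D ω * (D ω * T1 ω + (1 - D ω) * T0 ω)
        / (π (X ω) * K (D ω * T1 ω + (1 - D ω) * T0 ω))
        * K (D ω * T1 ω + (1 - D ω) * T0 ω))
      =ᵐ[P] fun ω => T1 ω / π (X ω) * D ω := by
    filter_upwards [hπpos, hKT] with ω hπω hk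
    rw [← hTdef ω]
    have hkne : K (T ω) ≠ 0 := ne_of_gt hk
    have hDT : D ω * T ω = T1 ω * D ω := by
      rcases hD01 ω with h | h <;> rw [hTdef ω, h] <;> ring
    have h2 : K (T ω) / (π (X ω) * K (T ω)) = 1 / π (X ω) := by
      rw [mul_comm, div_mul_eq_div_div, div_self hkne]
    calc D ω * T ω / (π (X ω) * K (T ω)) * K (T ω)
        = D ω * T ω * (K (T ω) / (π (X ω) * K (T ω))) := by ring
      _ = T1 ω * D ω * (1 / π (X ω)) := by rw [h2, hDT]
      _ = T1 ω / π (X ω) * D ω := by ring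
  have hae0 : (fun ω => (1 - D ω) * (D ω * T1 ω + (1 - D ω) * T0 ω)
        / ((1 - π (X ω)) * K (D ω * T1 ω + (1 - D ω) * T0 ω))
        * K (D ω * T1 ω + (1 - D ω) * T0 ω))
      =ᵐ[P] fun ω => T0 ω / (1 - π (X ω)) * (1 - D ω) := by
    filter_upwards [hπpos, hKT] with ω hπω hk
    rw [← hTdef ω]
    have hkne : K (T ω) ≠ 0 := ne_of_gt hk
    have hDT : (1 - D ω) * T ω = T0 ω * (1 - D ω) := by
      rcases hD01 ω with h | h <;> rw [hTdef ω, h] <;> ring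
    have h2 : K (T ω) / ((1 - π (X ω)) * K (T ω)) = 1 / (1 - π (X ω)) := by
      rw [mul_comm, div_mul_eq_div_div, div_self hkne]
    calc (1 - D ω) * T ω / ((1 - π (X ω)) * K (T ω)) * K (T ω)
        = (1 - D ω) * T ω * (K (T ω) / ((1 - π (X ω)) * K (T ω))) := by ring
      _ = T0 ω * (1 - D ω) * (1 / (1 - π (X ω))) := by rw [h2, hDT]
      _ = T0 ω / (1 - π (X ω)) * (1 - D ω) := by ring
  -- conditional expectation identity
  have hπbd : ∀ᵐ ω ∂P, ‖π (X ω)‖ ≤ 1 := by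
    filter_upwards [hπpos] with ω hω
    rw [Real.norm_eq_abs, abs_of_pos hω.1]
    exact le_of_lt hω.2
  have hce : (fun ω => π (X ω)) =ᵐ[P]
      P[D | MeasurableSpace.comap (fun ω => (X ω, (T1 ω, T0 ω))) inferInstance] :=
    aux_condexp P X hX D hD hD01 (fun ω => (T1 ω, T0 ω)) (hT1.prodMk hT0) π hπ hπbd hps hci
  have hmV' : MeasurableSpace.comap (fun ω => (X ω, (T1 ω, T0 ω))) inferInstance
      ≤ ‹MeasurableSpace Ω› := (hX.prodMk (hT1.prodMk hT0)).comap_le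
  have hpairm : Measurable[MeasurableSpace.comap (fun ω => (X ω, (T1 ω, T0 ω))) inferInstance]
      (fun ω => (X ω, (T1 ω, T0 ω))) := measurable_iff_comap_le.mpr le_rfl
  have hW1sm : StronglyMeasurable[MeasurableSpace.comap
      (fun ω => (X ω, (T1 ω, T0 ω))) inferInstance] (fun ω => T1 ω / π (X ω)) :=
    Measurable.stronglyMeasurable
      ((measurable_snd.fst.div (hπ.comp measurable_fst)).comp hpairm)
  have hW0sm : StronglyMeasurable[MeasurableSpace.comap
      (fun ω => (X ω, (T1 ω, T0 ω))) inferInstance] (fun ω => T0 ω / (1 - π (X ω))) :=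
    Measurable.stronglyMeasurable
      ((measurable_snd.snd.div (measurable_const.sub (hπ.comp measurable_fst))).comp hpairm)
  have hDint : Integrable D P := by
    refine (integrable_const (1:ℝ)).mono' hD.aestronglyMeasurable ?_
    filter_upwards with ω
    rcases hD01 ω with h | h <;> simp [h]
  -- case 1
  have h1 : (∫ ω, D ω * (if T ω ≤ C ω then (1 : ℝ) else 0) * Y ω / (π (X ω) * K (Y ω)) ∂P)
      = ∫ ω, T1 ω ∂P := by
    have hWD : Integrable ((fun ω => T1 ω / π (X ω)) * D) P := by
      have := hcen1int.congr hae1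
      exact this
    have hmul := condExp_mul_of_stronglyMeasurable_left hW1sm hWD hDint
    calc (∫ ω, D ω * (if T ω ≤ C ω then (1 : ℝ) else 0) * Y ω / (π (X ω) * K (Y ω)) ∂P)
        = ∫ ω, (if D ω * T1 ω + (1 - D ω) * T0 ω ≤ C ω then (1 : ℝ) else 0)
            * (D ω * (D ω * T1 ω + (1 - D ω) * T0 ω)
              / (π (X ω) * K (D ω * T1 ω + (1 - D ω) * T0 ω))) ∂P :=
          integral_congr_ae (Filter.Eventually.of_forall hpt1)
      _ = ∫ ω, D ω * (D ω * T1 ω + (1 - D ω) * T0 ω)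
            / (π (X ω) * K (D ω * T1 ω + (1 - D ω) * T0 ω))
            * K (D ω * T1 ω + (1 - D ω) * T0 ω) ∂P := hcen1
      _ = ∫ ω, ((fun ω => T1 ω / π (X ω)) * D) ω ∂P := integral_congr_ae hae1
      _ = ∫ ω, (P[(fun ω => T1 ω / π (X ω)) * D |
            MeasurableSpace.comap (fun ω => (X ω, (T1 ω, T0 ω))) inferInstance]) ω ∂P :=
          (integral_condExp hmV').symm
      _ = ∫ ω, T1 ω ∂P := by
          refine integral_congr_ae ?_
          filter_upwards [hmul, hce, hπpos] with ω hm hc hπω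
          rw [hm]
          simp only [Pi.mul_apply]
          rw [← hc]
          exact div_mul_cancel₀ _ (ne_of_gt hπω.1)
  -- case 0
  have h0 : (∫ ω, (1 - D ω) * (if T ω ≤ C ω then (1 : ℝ) else 0) * Y ω
        / ((1 - π (X ω)) * K (Y ω)) ∂P) = ∫ ω, T0 ω ∂P := by
    have hWD : Integrable ((fun ω => T0 ω / (1 - π (X ω))) * (fun ω => 1 - D ω)) P := by
      have := hcen0int.congr hae0
      exact this
    have hDint' : Integrable (fun ω => (1:ℝ) - D ω) P := (integrable_const (1:ℝ)).sub hDint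
    have hmul := condExp_mul_of_stronglyMeasurable_left hW0sm hWD hDint'
    have hsub : P[(fun ω => (1:ℝ) - D ω) |
        MeasurableSpace.comap (fun ω => (X ω, (T1 ω, T0 ω))) inferInstance]
        =ᵐ[P] fun ω => 1 - π (X ω) := by
      have hc1 := condExp_const hmV' (1:ℝ) (μ := P)
      have hcs := condExp_sub (μ := P)
        (m := MeasurableSpace.comap (fun ω => (X ω, (T1 ω, T0 ω))) inferInstance)
        (integrable_const (1:ℝ)) hDint
      have hceD : P[D | MeasurableSpace.comap (fun ω => (X ω, (T1 ω, T0 ω))) inferInstance]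
          =ᵐ[P] fun ω => π (X ω) := hce.symm
      have heq : (fun ω => (1:ℝ) - D ω) = (fun _ : Ω => (1:ℝ)) - D := rfl
      rw [heq]
      filter_upwards [hcs, hceD] with ω h₁ h₃
      rw [h₁]
      simp only [Pi.sub_apply]
      rw [congrFun hc1 ω, h₃]
    calc (∫ ω, (1 - D ω) * (if T ω ≤ C ω then (1 : ℝ) else 0) * Y ω
          / ((1 - π (X ω)) * K (Y ω)) ∂P)
        = ∫ ω, (if D ω * T1 ω + (1 - D ω) * T0 ω ≤ C ω then (1 : ℝ) else 0)
            * ((1 - D ω) * (D ω * T1 ω + (1 - D ω) * T0 ω)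
              / ((1 - π (X ω)) * K (D ω * T1 ω + (1 - D ω) * T0 ω))) ∂P :=
          integral_congr_ae (Filter.Eventually.of_forall hpt0)
      _ = ∫ ω, (1 - D ω) * (D ω * T1 ω + (1 - D ω) * T0 ω)
            / ((1 - π (X ω)) * K (D ω * T1 ω + (1 - D ω) * T0 ω))
            * K (D ω * T1 ω + (1 - D ω) * T0 ω) ∂P := hcen0
      _ = ∫ ω, ((fun ω => T0 ω / (1 - π (X ω))) * (fun ω => 1 - D ω)) ω ∂P :=
          integral_congr_ae hae0
      _ = ∫ ω, (P[(fun ω => T0 ω / (1 - π (X ω))) * (fun ω => 1 - D ω) |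
            MeasurableSpace.comap (fun ω => (X ω, (T1 ω, T0 ω))) inferInstance]) ω ∂P :=
          (integral_condExp hmV').symm
      _ = ∫ ω, T0 ω ∂P := by
          refine integral_congr_ae ?_
          filter_upwards [hmul, hsub, hπpos] with ω hm hc hπω
          rw [hm]
          simp only [Pi.mul_apply]
          rw [hc]
          have hne : (1:ℝ) - π (X ω) ≠ 0 := ne_of_gt (sub_pos.mpr hπω.2)
          exact div_mul_cancel₀ _ hne
  rw [h1, h0]
end

section
/- Let (Ω, 𝓕, P) be a probability space with Ω a standard Borel space. Let X : Ω → ℝ^p, D : Ω → ℝ taking values in {0, 1}, and T : Ω → ℝ a random variable. Let C : Ω → ℝ be independent of the random vector (T, D, X), and define Y = min(T, C), Δ = 1{T ≤ C}, and K(u) = P(C ≥ u), with K(T) > 0 almost surely. Let π : ℝ^p → ℝ be measurable with 0 < π(X) ≤ 1 almost surely and E[D | σ(X)] = π(X) almost surely. Assume D·Δ/(π(X)·K(Y)) is integrable. Then E[D · Δ / (π(X) · K(Y))] = 1. -/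
open MeasureTheory ProbabilityTheory

/-- **population version of the auxiliary censoring estimating equation (4).**
On a standard Borel probability space, let `X : Ω → ℝ^p` be covariates, `D` a binary
treatment indicator, and `T : Ω → ℝ` the survival time. Let `C` be a censoring time
independent of `(T, D, X)`, `Y = min(T, C)` the observed time, `Δ = 1{T ≤ C}` the censoring
indicator, and `K u = P(C ≥ u)` the censoring survival function, with `K(T) > 0` a.s. Let `π`
be a measurable propensity score with `0 < π(X) ≤ 1` a.s. and `E[D | σ(X)] = π(X)` a.s. If
`D·Δ/(π(X)·K(Y))` is integrable, then `E[D·Δ/(π(X)·K(Y))] = 1`. -/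
theorem censoring_estimating_equation_population
    {Ω : Type*} [MeasurableSpace Ω] [StandardBorelSpace Ω]
    (P : Measure Ω) [IsProbabilityMeasure P]
    {p : ℕ} (X : Ω → EuclideanSpace ℝ (Fin p)) (hX : Measurable X)
    (D : Ω → ℝ) (hD : Measurable D) (hD01 : ∀ ω, D ω = 0 ∨ D ω = 1)
    (T : Ω → ℝ) (hT : Measurable T)
    (C : Ω → ℝ) (hC : Measurable C)
    (hCindep : IndepFun C (fun ω => (T ω, D ω, X ω)) P)
    (Y : Ω → ℝ) (hYdef : ∀ ω, Y ω = min (T ω) (C ω))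
    (K : ℝ → ℝ) (hK : ∀ u, K u = (P {ω | u ≤ C ω}).toReal)
    (hKT : ∀ᵐ ω ∂P, 0 < K (T ω))
    (π : EuclideanSpace ℝ (Fin p) → ℝ) (hπ : Measurable π)
    (hπpos : ∀ᵐ ω ∂P, 0 < π (X ω) ∧ π (X ω) ≤ 1)
    (hps : P[D | MeasurableSpace.comap X inferInstance] =ᵐ[P] fun ω => π (X ω))
    (hint : Integrable
      (fun ω => D ω * (if T ω ≤ C ω then (1 : ℝ) else 0) / (π (X ω) * K (Y ω))) P) :
    ∫ ω, D ω * (if T ω ≤ C ω then (1 : ℝ) else 0) / (π (X ω) * K (Y ω)) ∂P = 1 := by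
  classical
  set W : Ω → ℝ × ℝ × EuclideanSpace ℝ (Fin p) := fun ω => (T ω, D ω, X ω) with hWdef
  have hWm : Measurable W := hT.prodMk (hD.prodMk hX)
  -- K is antitone hence measurable
  have hKanti : Antitone K := by
    intro u v huv
    rw [hK u, hK v]
    exact ENNReal.toReal_mono (measure_ne_top P _)
      (measure_mono fun ω h => le_trans huv h)
  have hKmeas : Measurable K := hKanti.measurable
  -- the function on the product space
  set h : (ℝ × ℝ × EuclideanSpace ℝ (Fin p)) × ℝ → ℝ :=
    fun q => if q.1.1 ≤ q.2 then q.1.2.1 / (π q.1.2.2 * K q.1.1) else 0 with hhdef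
  have hfeq : (fun ω => D ω * (if T ω ≤ C ω then (1 : ℝ) else 0) / (π (X ω) * K (Y ω)))
      = fun ω => h (W ω, C ω) := by
    funext ω
    by_cases hc : T ω ≤ C ω
    · simp [h, W, hc, hYdef ω, min_eq_left hc]
    · simp [h, W, hc]
  have hhm : Measurable h := by
    have hs : MeasurableSet {q : (ℝ × ℝ × EuclideanSpace ℝ (Fin p)) × ℝ | q.1.1 ≤ q.2} :=
      measurableSet_le (measurable_fst.fst) measurable_snd
    refine Measurable.ite hs ?_ measurable_const
    exact (measurable_fst.snd.fst).div
      ((hπ.comp measurable_fst.snd.snd).mul (hKmeas.comp measurable_fst.fst))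
  haveI : IsProbabilityMeasure (P.map W) := Measure.isProbabilityMeasure_map hWm.aemeasurable
  haveI : IsProbabilityMeasure (P.map C) := Measure.isProbabilityMeasure_map hC.aemeasurable
  have hmap : P.map (fun ω => (W ω, C ω)) = (P.map W).prod (P.map C) :=
    (indepFun_iff_map_prod_eq_prod_map_map hWm.aemeasurable hC.aemeasurable).mp hCindep.symm
  have hinth : Integrable h ((P.map W).prod (P.map C)) := by
    rw [← hmap,
      integrable_map_measure
        (by rw [hmap]; exact hhm.aestronglyMeasurable) (hWm.prodMk hC).aemeasurable]
    have : h ∘ (fun ω => (W ω, C ω))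
        = fun ω => D ω * (if T ω ≤ C ω then (1 : ℝ) else 0) / (π (X ω) * K (Y ω)) := by
      rw [hfeq]; rfl
    rw [this]; exact hint
  -- inner integral over c
  have hinner : ∀ w : ℝ × ℝ × EuclideanSpace ℝ (Fin p),
      ∫ c, h (w, c) ∂(P.map C) = K w.1 * (w.2.1 / (π w.2.2 * K w.1)) := by
    intro w
    have hs : MeasurableSet {c : ℝ | w.1 ≤ c} := measurableSet_le measurable_const measurable_id
    have heq : (fun c => h (w, c))
        = Set.indicator {c : ℝ | w.1 ≤ c} (fun _ => w.2.1 / (π w.2.2 * K w.1)) := by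
      funext c
      by_cases hc : w.1 ≤ c
      · simp [h, hc, Set.indicator_of_mem, hc]
      · simp [h, hc]
    rw [heq, integral_indicator_const _ hs, measureReal_def, Measure.map_apply hC hs, smul_eq_mul]
    congr 1
    rw [hK w.1]
    rfl
  -- a.e. positivity of K on first coordinate under map W
  have hKW : ∀ᵐ w ∂(P.map W), 0 < K w.1 := by
    exact (ae_map_iff (p := fun w : ℝ × ℝ × EuclideanSpace ℝ (Fin p) => 0 < K w.1)
      hWm.aemeasurable
      (measurableSet_lt measurable_const (hKmeas.comp measurable_fst))).mpr hKT
  have hsimp : ∀ w : ℝ × ℝ × EuclideanSpace ℝ (Fin p), 0 < K w.1 →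
      K w.1 * (w.2.1 / (π w.2.2 * K w.1)) = w.2.1 / π w.2.2 := by
    intro w hw
    by_cases hx : π w.2.2 = 0
    · simp [hx]
    · field_simp
  -- integrability transfer
  have hintW : Integrable (fun w : ℝ × ℝ × EuclideanSpace ℝ (Fin p) => ∫ c, h (w, c) ∂(P.map C)) (P.map W) :=
    hinth.integral_prod_left
  have hπXm : AEStronglyMeasurable (fun w : ℝ × ℝ × EuclideanSpace ℝ (Fin p) => w.2.1 / π w.2.2) (P.map W) :=
    by
      have : Measurable (fun w : ℝ × ℝ × EuclideanSpace ℝ (Fin p) => w.2.1 / π w.2.2) :=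
        (measurable_snd.fst).div (hπ.comp measurable_snd.snd)
      exact this.aestronglyMeasurable
  have hintW2 : Integrable (fun w : ℝ × ℝ × EuclideanSpace ℝ (Fin p) => w.2.1 / π w.2.2) (P.map W) := by
    refine hintW.congr ?_
    filter_upwards [hKW] with w hw
    rw [hinner w, hsimp w hw]
  have hintDπ : Integrable (fun ω => D ω / π (X ω)) P := by
    have := (integrable_map_measure hπXm hWm.aemeasurable).mp hintW2
    exact this
  -- Step C : ∫ D/π(X) = 1 via conditional expectation
  have hm : MeasurableSpace.comap X inferInstance ≤ ‹MeasurableSpace Ω› := hX.comap_le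
  set g : Ω → ℝ := fun ω => (π (X ω))⁻¹ with hgdef
  have hXm : Measurable[MeasurableSpace.comap X inferInstance] X := Measurable.of_comap_le le_rfl
  have hgm : StronglyMeasurable[MeasurableSpace.comap X inferInstance] g :=
    (Measurable.stronglyMeasurable ((hπ.inv).comp hXm))
  have hgD : (fun ω => D ω / π (X ω)) = g * D := by
    funext ω; simp [g, div_eq_mul_inv, mul_comm]
  have hDint : Integrable D P := by
    refine (integrable_const (1 : ℝ)).mono' hD.aestronglyMeasurable ?_
    refine ae_of_all _ fun ω => ?_
    rcases hD01 ω with hd | hd <;> simp [hd]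
  have hfgint : Integrable (g * D) P := by rwa [hgD] at hintDπ
  have hpull : P[g * D | MeasurableSpace.comap X inferInstance] =ᵐ[P] g * P[D | MeasurableSpace.comap X inferInstance] :=
    condExp_mul_of_stronglyMeasurable_left hgm hfgint hDint
  have hone : g * P[D | MeasurableSpace.comap X inferInstance] =ᵐ[P] fun _ => (1 : ℝ) := by
    filter_upwards [hps, hπpos] with ω hω hπω
    simp only [Pi.mul_apply, hω, g]
    exact inv_mul_cancel₀ (ne_of_gt hπω.1)
  have hstepC : ∫ ω, D ω / π (X ω) ∂P = 1 := by
    rw [hgD, ← integral_condExp hm (μ := P) (f := g * D)]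
    rw [integral_congr_ae (hpull.trans hone)]
    simp
  -- assemble
  rw [hfeq]
  have h1 : ∫ ω, h (W ω, C ω) ∂P = ∫ q, h q ∂((P.map W).prod (P.map C)) := by
    rw [← hmap, integral_map (hWm.prodMk hC).aemeasurable
      (by rw [hmap]; exact hhm.aestronglyMeasurable)]
  rw [h1, integral_prod _ hinth]
  have h2 : ∫ w, ∫ c, h (w, c) ∂(P.map C) ∂(P.map W)
      = ∫ w, w.2.1 / π w.2.2 ∂(P.map W) := by
    refine integral_congr_ae ?_
    filter_upwards [hKW] with w hw
    rw [hinner w, hsimp w hw]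
  rw [h2, integral_map hWm.aemeasurable hπXm]
  exact hstepC
end
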